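/- arXiv:2308.09011 — 7 statements merged into one kernel-verified Lean document; each statement's English description precedes it below -/
import Mathlib

section
/- Let D be a quasi-symmetric SPBIBD with parameters (v,b,r,k,λ₁,0) of type (k−1,t) with intersection numbers x=0 and y>1. Then y divides tλ₁, t > y, and λ₁ < tλ₁/y < r. -/
open Finset

/-- The set of blocks incident with a point `p`. -/
def blocksThru {P Bl : Type} [Fintype Bl] [DecidableEq P] (pts : Bl → Finset P)
    (p : P) : Finset Bl :=
  Finset.univ.filter (fun C => p ∈ pts C)

/-- The number of blocks containing both points `p` and `q`. -/
def lamCount {P Bl : Type} [Fintype Bl] [DecidableEq P] [DecidableEq Bl]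
    (pts : Bl → Finset P) (p q : P) : ℕ :=
  ((blocksThru pts p) ∩ (blocksThru pts q)).card

lemma mem_blocksThru {P Bl : Type} [Fintype Bl] [DecidableEq P] (pts : Bl → Finset P)
    (p : P) (C : Bl) : C ∈ blocksThru pts p ↔ p ∈ pts C := by
  simp [blocksThru]

/-- if moreover y > 1, then t > y, λ₁ < tλ₁/y < r, and y ∣ tλ₁. -/
theorem stmt1
    {P Bl : Type} [Fintype P] [Fintype Bl] [DecidableEq P] [DecidableEq Bl]
    (pts : Bl → Finset P) (v b r k t lam y : ℕ)
    (hv : Fintype.card P = v) (hb : Fintype.card Bl = b)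
    (hk : ∀ C : Bl, (pts C).card = k)
    (hr : ∀ p : P, (blocksThru pts p).card = r)
    (hlam : ∀ p q : P, p ≠ q → lamCount pts p q = lam ∨ lamCount pts p q = 0)
    (hflag : ∀ (p : P) (C : Bl), p ∈ pts C →
      ((pts C).filter (fun q => q ≠ p ∧ lamCount pts p q = lam)).card = k - 1)
    (hnonflag : ∀ (p : P) (C : Bl), p ∉ pts C →
      ((pts C).filter (fun q => lamCount pts p q = lam)).card = t)
    (hqs : ∀ C C' : Bl, C ≠ C' →
      (pts C ∩ pts C').card = 0 ∨ (pts C ∩ pts C').card = y)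
    (hx0 : ∃ C C' : Bl, C ≠ C' ∧ (pts C ∩ pts C').card = 0)
    (hy0 : ∃ C C' : Bl, C ≠ C' ∧ (pts C ∩ pts C').card = y)
    (hkv : k < v) (hrb : r < b) (ht : 1 ≤ t) (htk : t < k) (hlam1 : 1 ≤ lam)
    (hy : 1 < y)
    : y < t ∧ y ∣ t * lam ∧
      (lam : ℚ) < ((t : ℚ) * (lam : ℚ)) / (y : ℚ) ∧
      ((t : ℚ) * (lam : ℚ)) / (y : ℚ) < (r : ℚ) := by
  classical
  -- any two distinct points in a common block are λ-related
  have hA : ∀ (C : Bl) (p q : P), p ∈ pts C → q ∈ pts C → p ≠ q →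
      lamCount pts p q = lam := by
    intro C p q hp hq hne
    have h1 := hflag p C hp
    have hsub : (pts C).filter (fun q => q ≠ p ∧ lamCount pts p q = lam)
        ⊆ (pts C).erase p := by
      intro x hx
      rcases mem_filter.mp hx with ⟨hx1, hx2, _⟩
      exact mem_erase.mpr ⟨hx2, hx1⟩
    have hcard : ((pts C).erase p).card = k - 1 := by
      rw [card_erase_of_mem hp, hk]
    have heq : (pts C).filter (fun q => q ≠ p ∧ lamCount pts p q = lam)
        = (pts C).erase p :=
      eq_of_subset_of_card_le hsub (le_of_eq (hcard.trans h1.symm))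
    have hqmem : q ∈ (pts C).filter (fun q => q ≠ p ∧ lamCount pts p q = lam) := by
      rw [heq]; exact mem_erase.mpr ⟨hne.symm, hq⟩
    exact (mem_filter.mp hqmem).2.2
  -- the set of blocks through p meeting C
  set Mset : P → Bl → Finset Bl := fun p C =>
    (blocksThru pts p).filter (fun D => (pts C ∩ pts D).Nonempty) with hMset
  -- the double count: t·λ = y·|Mset p C| for any non-flag (p, C)
  have hB : ∀ (p : P) (C : Bl), p ∉ pts C → t * lam = y * (Mset p C).card := by
    intro p C hp
    have h0 : ∀ q : P, lamCount pts p q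
        = ((blocksThru pts p).filter (fun D => q ∈ pts D)).card := by
      intro q
      unfold lamCount
      congr 1
      ext D
      simp [blocksThru, and_assoc]
    have key : ∑ q ∈ pts C, lamCount pts p q
        = ∑ D ∈ blocksThru pts p, (pts C ∩ pts D).card := by
      calc ∑ q ∈ pts C, lamCount pts p q
          = ∑ q ∈ pts C, ∑ D ∈ blocksThru pts p, if q ∈ pts D then 1 else 0 := by
            refine sum_congr rfl fun q _ => ?_
            rw [h0 q, card_filter]
        _ = ∑ D ∈ blocksThru pts p, ∑ q ∈ pts C, if q ∈ pts D then 1 else 0 :=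
            sum_comm
        _ = ∑ D ∈ blocksThru pts p, (pts C ∩ pts D).card := by
            refine sum_congr rfl fun D _ => ?_
            rw [← card_filter, filter_mem_eq_inter]
    have lhs : ∑ q ∈ pts C, lamCount pts p q = t * lam := by
      rw [← sum_filter_add_sum_filter_not (pts C) (fun q => lamCount pts p q = lam)]
      have e1 : ∑ q ∈ (pts C).filter (fun q => lamCount pts p q = lam),
          lamCount pts p q = t * lam := by
        calc ∑ q ∈ (pts C).filter (fun q => lamCount pts p q = lam), lamCount pts p q
            = ∑ _q ∈ (pts C).filter (fun q => lamCount pts p q = lam), lam :=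
              sum_congr rfl (fun q hq => (mem_filter.mp hq).2)
          _ = t * lam := by rw [sum_const, hnonflag p C hp, smul_eq_mul]
      have e2 : ∑ q ∈ (pts C).filter (fun q => ¬ lamCount pts p q = lam),
          lamCount pts p q = 0 := by
        refine sum_eq_zero fun q hq => ?_
        rcases mem_filter.mp hq with ⟨hq1, hq2⟩
        have hne : p ≠ q := fun h => hp (h ▸ hq1)
        rcases hlam p q hne with h | h
        · exact absurd h hq2
        · exact h
      rw [e1, e2, add_zero]
    have rhs : ∑ D ∈ blocksThru pts p, (pts C ∩ pts D).card
        = y * (Mset p C).card := by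
      rw [← sum_filter_add_sum_filter_not (blocksThru pts p)
        (fun D => (pts C ∩ pts D).Nonempty)]
      have e1 : ∑ D ∈ (blocksThru pts p).filter (fun D => (pts C ∩ pts D).Nonempty),
          (pts C ∩ pts D).card = y * (Mset p C).card := by
        calc ∑ D ∈ (blocksThru pts p).filter (fun D => (pts C ∩ pts D).Nonempty),
            (pts C ∩ pts D).card
            = ∑ _D ∈ (blocksThru pts p).filter (fun D => (pts C ∩ pts D).Nonempty),
              y := by
              refine sum_congr rfl fun D hD => ?_
              rcases mem_filter.mp hD with ⟨hD1, hD2⟩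
              have hpD : p ∈ pts D := (mem_blocksThru pts p D).mp hD1
              have hne : C ≠ D := fun h => hp (h ▸ hpD)
              rcases hqs C D hne with h | h
              · exact absurd (card_eq_zero.mp h) (Finset.nonempty_iff_ne_empty.mp hD2)
              · exact h
          _ = y * (Mset p C).card := by rw [sum_const, smul_eq_mul, mul_comm]
      have e2 : ∑ D ∈ (blocksThru pts p).filter
          (fun D => ¬ (pts C ∩ pts D).Nonempty), (pts C ∩ pts D).card = 0 := by
        refine sum_eq_zero fun D hD => ?_
        rcases mem_filter.mp hD with ⟨_, hD2⟩
        rw [not_nonempty_iff_eq_empty] at hD2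
        rw [hD2, card_empty]
      rw [e1, e2, add_zero]
    rw [← lhs, key, rhs]
  -- inclusion: blocks through p and a point q of C meeting condition
  have hsubM : ∀ (p : P) (C : Bl) (q : P), q ∈ pts C →
      blocksThru pts p ∩ blocksThru pts q ⊆ Mset p C := by
    intro p C q hq D hD
    rcases mem_inter.mp hD with ⟨hD1, hD2⟩
    have hqD : q ∈ pts D := (mem_blocksThru pts q D).mp hD2
    exact mem_filter.mpr ⟨hD1, ⟨q, mem_inter.mpr ⟨hq, hqD⟩⟩⟩
  -- lam ≤ |Mset p C| for nonflags
  have hlamM : ∀ (p : P) (C : Bl), p ∉ pts C → lam ≤ (Mset p C).card := by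
    intro p C hp
    have hcardt := hnonflag p C hp
    have hne : ((pts C).filter (fun q => lamCount pts p q = lam)).Nonempty := by
      rw [← card_pos, hcardt]; omega
    obtain ⟨q, hq⟩ := hne
    rcases mem_filter.mp hq with ⟨hq1, hq2⟩
    calc lam = lamCount pts p q := hq2.symm
      _ ≤ (Mset p C).card := card_le_card (hsubM p C q hq1)
  -- pick a block and a point off it
  obtain ⟨C1, _C2, _h12, _⟩ := hy0
  have hp0 : ∃ p : P, p ∉ pts C1 := by
    have hne : (pts C1)ᶜ.Nonempty := by
      rw [← card_pos, card_compl, hk, hv]; omega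
    obtain ⟨p, hp⟩ := hne
    exact ⟨p, mem_compl.mp hp⟩
  obtain ⟨p0, hp0⟩ := hp0
  have hB1 := hB p0 C1 hp0
  have hM1 := hlamM p0 C1 hp0
  -- y ≤ t
  have hyt : y ≤ t := by
    have : y * lam ≤ y * (Mset p0 C1).card := Nat.mul_le_mul_left y hM1
    rw [← hB1] at this
    exact Nat.le_of_mul_le_mul_right (by omega : y * lam ≤ t * lam) (by omega)
  -- t ≠ y
  have htney : t ≠ y := by
    intro hty
    have hMcard : (Mset p0 C1).card = lam := by
      have : y * lam = y * (Mset p0 C1).card := by rw [← hB1, hty, mul_comm]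
      exact (Nat.eq_of_mul_eq_mul_left (by omega) this).symm
    -- every q in the t-set satisfies blocksThru p0 ∩ blocksThru q = Mset p0 C1
    have heqM : ∀ q : P, q ∈ pts C1 → lamCount pts p0 q = lam →
        blocksThru pts p0 ∩ blocksThru pts q = Mset p0 C1 := by
      intro q hq1 hq2
      refine eq_of_subset_of_card_le (hsubM p0 C1 q hq1) ?_
      rw [hMcard]
      exact le_of_eq hq2.symm
    -- two distinct points in the t-set
    have hcardt := hnonflag p0 C1 hp0
    have h2 : 1 < ((pts C1).filter (fun q => lamCount pts p0 q = lam)).card := by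
      rw [hcardt]; omega
    obtain ⟨q1, hq1, q2, hq2, hq12⟩ := one_lt_card.mp h2
    rcases mem_filter.mp hq1 with ⟨hq1C, hq1l⟩
    rcases mem_filter.mp hq2 with ⟨hq2C, hq2l⟩
    -- a block in Mset
    have hMne : (Mset p0 C1).Nonempty := by
      rw [← card_pos, hMcard]; omega
    obtain ⟨D, hD⟩ := hMne
    have hDq1 : q1 ∈ pts D := by
      have : D ∈ blocksThru pts p0 ∩ blocksThru pts q1 := by
        rw [heqM q1 hq1C hq1l]; exact hD
      exact (mem_blocksThru pts q1 D).mp (mem_inter.mp this).2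
    have hDq2 : q2 ∈ pts D := by
      have : D ∈ blocksThru pts p0 ∩ blocksThru pts q2 := by
        rw [heqM q2 hq2C hq2l]; exact hD
      exact (mem_blocksThru pts q2 D).mp (mem_inter.mp this).2
    have hlamq : lamCount pts q1 q2 = lam := hA D q1 q2 hDq1 hDq2 hq12
    -- C1 together with Mset gives lam + 1 blocks through q1, q2
    have hC1not : C1 ∉ Mset p0 C1 := by
      intro h
      have := (mem_filter.mp h).1
      exact hp0 ((mem_blocksThru pts p0 C1).mp this)
    have hins : insert C1 (Mset p0 C1) ⊆ blocksThru pts q1 ∩ blocksThru pts q2 := by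
      intro E hE
      rcases mem_insert.mp hE with h | h
      · rw [h]
        exact mem_inter.mpr ⟨(mem_blocksThru pts q1 C1).mpr hq1C,
          (mem_blocksThru pts q2 C1).mpr hq2C⟩
      · have h1 : E ∈ blocksThru pts p0 ∩ blocksThru pts q1 := by
          rw [heqM q1 hq1C hq1l]; exact h
        have h2 : E ∈ blocksThru pts p0 ∩ blocksThru pts q2 := by
          rw [heqM q2 hq2C hq2l]; exact h
        exact mem_inter.mpr ⟨(mem_inter.mp h1).2, (mem_inter.mp h2).2⟩
    have hcard2 : lam + 1 ≤ lamCount pts q1 q2 := by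
      have := card_le_card hins
      rw [card_insert_of_notMem hC1not, hMcard] at this
      unfold lamCount
      omega
    omega
  have hty : y < t := lt_of_le_of_ne hyt (Ne.symm htney)
  -- now the disjoint pair for strictness against r
  obtain ⟨Ca, Cb, hab, hdis⟩ := hx0
  have hCbne : (pts Cb).Nonempty := by rw [← card_pos, hk]; omega
  obtain ⟨p2, hp2⟩ := hCbne
  have hp2a : p2 ∉ pts Ca := by
    intro h
    have : p2 ∈ pts Ca ∩ pts Cb := mem_inter.mpr ⟨h, hp2⟩
    rw [card_eq_zero.mp hdis] at this
    exact absurd this (notMem_empty p2)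
  have hB2 := hB p2 Ca hp2a
  set m := (Mset p2 Ca).card with hm
  have hMr : m ≤ r - 1 := by
    have hsub : Mset p2 Ca ⊆ (blocksThru pts p2).erase Cb := by
      intro D hD
      rcases mem_filter.mp hD with ⟨hD1, hD2⟩
      refine mem_erase.mpr ⟨?_, hD1⟩
      intro h
      subst h
      rw [card_eq_zero.mp hdis] at hD2
      exact absurd hD2 (by simp)
    have := card_le_card hsub
    rwa [card_erase_of_mem ((mem_blocksThru pts p2 Cb).mpr hp2), hr] at this
  have hr1 : 1 ≤ r := by
    have : Cb ∈ blocksThru pts p2 := (mem_blocksThru pts p2 Cb).mpr hp2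
    have := card_pos.mpr ⟨Cb, this⟩
    rw [hr] at this
    omega
  have hmr : m < r := by omega
  have hlamm : lam < m := by
    have h1 : lam * y < lam * t := mul_lt_mul_of_pos_left hty (show 0 < lam by omega)
    have h2 : lam * t = m * y := by rw [mul_comm lam t, hB2, mul_comm]
    have h3 : lam * y < m * y := by omega
    exact Nat.lt_of_mul_lt_mul_right h3
  -- rational computations
  have hy0' : (y : ℚ) ≠ 0 := by positivity
  have hcast : (t : ℚ) * (lam : ℚ) = (y : ℚ) * (m : ℚ) := by exact_mod_cast hB2
  have hdiv : ((t : ℚ) * (lam : ℚ)) / (y : ℚ) = (m : ℚ) := by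
    rw [hcast, mul_div_cancel_left₀ _ hy0']
  refine ⟨hty, ⟨m, hB2⟩, ?_, ?_⟩
  · rw [hdiv]; exact_mod_cast hlamm
  · rw [hdiv]; exact_mod_cast hmr
end

section
/- Let D be a quasi-symmetric SPBIBD with parameters (v,b,r,k,λ₁,0) of type (k−1,t) with intersection numbers x=0 and y>0. Then for every block B there exist blocks B₁ and B₂ with |B ∩ B₁| = 0 and |B ∩ B₂| = y. -/
open Finset

lemma key_count {P Bl : Type} [Fintype P] [Fintype Bl] [DecidableEq P] [DecidableEq Bl]
    (pts : Bl → Finset P) (r k y : ℕ)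
    (hk : ∀ C : Bl, (pts C).card = k)
    (hr : ∀ p : P, (blocksThru pts p).card = r)
    (hqs : ∀ C C' : Bl, C ≠ C' →
      (pts C ∩ pts C').card = 0 ∨ (pts C ∩ pts C').card = y)
    (C : Bl) :
    y * ((Finset.univ.filter (fun C' => C' ≠ C ∧ (pts C ∩ pts C').card ≠ 0)).card)
      = k * (r - 1) := by
  have h1 : ∑ C' ∈ Finset.univ.filter (fun C' => C' ≠ C), (pts C ∩ pts C').card
      = k * (r - 1) := by
    have step : ∀ C' : Bl, (pts C ∩ pts C').card
        = ∑ p ∈ pts C, if p ∈ pts C' then 1 else 0 := by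
      intro C'
      have : pts C ∩ pts C' = (pts C).filter (fun p => p ∈ pts C') := by
        ext p; simp [Finset.mem_filter, Finset.mem_inter]
      rw [this, Finset.card_filter]
    calc ∑ C' ∈ Finset.univ.filter (fun C' => C' ≠ C), (pts C ∩ pts C').card
        = ∑ C' ∈ Finset.univ.filter (fun C' => C' ≠ C), ∑ p ∈ pts C,
            if p ∈ pts C' then 1 else 0 := by
          exact Finset.sum_congr rfl (fun C' _ => step C')
      _ = ∑ p ∈ pts C, ∑ C' ∈ Finset.univ.filter (fun C' => C' ≠ C),
            if p ∈ pts C' then 1 else 0 := Finset.sum_comm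
      _ = ∑ p ∈ pts C, (r - 1) := by
          refine Finset.sum_congr rfl (fun p hp => ?_)
          rw [← Finset.card_filter]
          have heq : (Finset.univ.filter (fun C' => C' ≠ C)).filter
              (fun C' => p ∈ pts C') = (blocksThru pts p).erase C := by
            ext C'
            simp [blocksThru, Finset.mem_filter, Finset.mem_erase, and_comm]
          rw [heq, Finset.card_erase_of_mem, hr p]
          simp [blocksThru, hp]
      _ = k * (r - 1) := by rw [Finset.sum_const, hk, smul_eq_mul]
  have h2 : ∑ C' ∈ Finset.univ.filter (fun C' => C' ≠ C), (pts C ∩ pts C').card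
      = ((Finset.univ.filter (fun C' => C' ≠ C ∧ (pts C ∩ pts C').card ≠ 0)).card) * y := by
    rw [← Finset.sum_filter_ne_zero, Finset.filter_filter]
    have : ∀ C' ∈ Finset.univ.filter (fun C' => C' ≠ C ∧ (pts C ∩ pts C').card ≠ 0),
        (pts C ∩ pts C').card = y := by
      intro C' hC'
      simp only [Finset.mem_filter] at hC'
      rcases hqs C C' (Ne.symm hC'.2.1) with h | h
      · exact absurd h hC'.2.2
      · exact h
    rw [Finset.sum_congr rfl this, Finset.sum_const, smul_eq_mul]
  rw [mul_comm, ← h2, h1]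

/-- for every block B there exist blocks B₁, B₂ with
|B ∩ B₁| = 0 and |B ∩ B₂| = y. -/
theorem stmt5
    {P Bl : Type} [Fintype P] [Fintype Bl] [DecidableEq P] [DecidableEq Bl]
    (pts : Bl → Finset P) (v b r k t lam y : ℕ)
    (hv : Fintype.card P = v) (hb : Fintype.card Bl = b)
    (hk : ∀ C : Bl, (pts C).card = k)
    (hr : ∀ p : P, (blocksThru pts p).card = r)
    (hlam : ∀ p q : P, p ≠ q → lamCount pts p q = lam ∨ lamCount pts p q = 0)
    (hflag : ∀ (p : P) (C : Bl), p ∈ pts C →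
      ((pts C).filter (fun q => q ≠ p ∧ lamCount pts p q = lam)).card = k - 1)
    (hnonflag : ∀ (p : P) (C : Bl), p ∉ pts C →
      ((pts C).filter (fun q => lamCount pts p q = lam)).card = t)
    (hqs : ∀ C C' : Bl, C ≠ C' →
      (pts C ∩ pts C').card = 0 ∨ (pts C ∩ pts C').card = y)
    (hx0 : ∃ C C' : Bl, C ≠ C' ∧ (pts C ∩ pts C').card = 0)
    (hy0 : ∃ C C' : Bl, C ≠ C' ∧ (pts C ∩ pts C').card = y)
    (hkv : k < v) (hrb : r < b) (ht : 1 ≤ t) (htk : t < k) (hlam1 : 1 ≤ lam)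
    (hy : 0 < y)
    : ∀ C : Bl,
      (∃ C₁ : Bl, C₁ ≠ C ∧ (pts C ∩ pts C₁).card = 0) ∧
      (∃ C₂ : Bl, C₂ ≠ C ∧ (pts C ∩ pts C₂).card = y) := by
  intro C
  constructor
  · -- disjoint block
    obtain ⟨C₀, C₀', hne0, hdisj⟩ := hx0
    by_contra hcon
    push_neg at hcon
    -- then every C' ≠ C meets C
    have hF : Finset.univ.filter (fun C' => C' ≠ C ∧ (pts C ∩ pts C').card ≠ 0)
        = Finset.univ.erase C := by
      ext C'
      simp only [Finset.mem_filter, Finset.mem_erase, Finset.mem_univ, and_true, true_and]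
      constructor
      · exact fun h => h.1
      · intro h
        exact ⟨h, hcon C' h⟩
    have hF0 : Finset.univ.filter (fun C' => C' ≠ C₀ ∧ (pts C₀ ∩ pts C').card ≠ 0)
        ⊆ (Finset.univ.erase C₀).erase C₀' := by
      intro C' hC'
      simp only [Finset.mem_filter] at hC'
      simp only [Finset.mem_erase, Finset.mem_univ, and_true]
      refine ⟨fun h => ?_, hC'.2.1⟩
      subst h
      exact hC'.2.2 hdisj
    have e1 := key_count pts r k y hk hr hqs C
    have e2 := key_count pts r k y hk hr hqs C₀
    have hcards : (Finset.univ.filter (fun C' => C' ≠ C ∧ (pts C ∩ pts C').card ≠ 0)).card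
        = (Finset.univ.filter (fun C' => C' ≠ C₀ ∧ (pts C₀ ∩ pts C').card ≠ 0)).card :=
      Nat.eq_of_mul_eq_mul_left hy (e1.trans e2.symm)
    have hle := Finset.card_le_card hF0
    rw [← hcards, hF] at hle
    have hc1 : (Finset.univ.erase C).card = Fintype.card Bl - 1 := by
      rw [Finset.card_erase_of_mem (Finset.mem_univ C), Finset.card_univ]
    have hc2 : ((Finset.univ.erase C₀).erase C₀').card = Fintype.card Bl - 2 := by
      have hmem : C₀' ∈ Finset.univ.erase C₀ :=
        Finset.mem_erase.mpr ⟨Ne.symm hne0, Finset.mem_univ _⟩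
      rw [Finset.card_erase_of_mem hmem, Finset.card_erase_of_mem (Finset.mem_univ C₀),
        Finset.card_univ]
      omega
    rw [hc1, hc2] at hle
    have hb2 : 2 ≤ Fintype.card Bl := Fintype.one_lt_card_iff.mpr ⟨C₀, C₀', hne0⟩
    omega
  · -- y-intersecting block
    have hknv : pts C ≠ Finset.univ := by
      intro h
      rw [← hv, ← Finset.card_univ, ← h, hk C] at hkv
      exact lt_irrefl _ hkv
    obtain ⟨p, hp⟩ : ∃ p, p ∉ pts C := by
      by_contra h
      push_neg at h
      exact hknv (Finset.eq_univ_iff_forall.mpr h)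
    have hcard := hnonflag p C hp
    have hpos : 0 < ((pts C).filter (fun q => lamCount pts p q = lam)).card := by
      rw [hcard]; exact ht
    obtain ⟨q, hq⟩ := Finset.card_pos.mp hpos
    simp only [Finset.mem_filter] at hq
    have hlc : 0 < lamCount pts p q := by rw [hq.2]; exact hlam1
    obtain ⟨C', hC'⟩ := Finset.card_pos.mp hlc
    simp only [lamCount, blocksThru, Finset.mem_inter, Finset.mem_filter,
      Finset.mem_univ, true_and] at hC'
    have hne : C' ≠ C := fun h => hp (h ▸ hC'.1)
    have hcap : (pts C ∩ pts C').card ≠ 0 := by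
      rw [Finset.card_ne_zero]
      exact ⟨q, Finset.mem_inter.mpr ⟨hq.1, hC'.2⟩⟩
    rcases hqs C C' (Ne.symm hne) with h | h
    · exact absurd h hcap
    · exact ⟨C', hne, h⟩
end

section
/- Let D be a quasi-symmetric SPBIBD with parameters (v,b,r,k,λ₁,0) of type (k−1,t) with intersection numbers x=0 and y>0, and let Γ be its incidence graph. Then every block B ∈ B has eccentricity exactly 4 in Γ. In particular, two blocks are at distance 2 iff they intersect, at distance 4 iff they are disjoint, and a point p is at distance 1 from block B if p ∈ B and at distance 3 otherwise. -/
open Finset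

/-- The incidence graph of an incidence structure: points and blocks as the two
color classes, with a point adjacent to a block iff it lies in the block. -/
def incGraph {P Bl : Type} (pts : Bl → Finset P) : SimpleGraph (P ⊕ Bl) :=
  SimpleGraph.fromRel (fun u w =>
    ∃ (p : P) (C : Bl), u = Sum.inl p ∧ w = Sum.inr C ∧ p ∈ pts C)

section helpers
variable {P Bl : Type} {pts : Bl → Finset P}

lemma inc_adj {p : P} {C : Bl} :
    (incGraph pts).Adj (Sum.inl p) (Sum.inr C) ↔ p ∈ pts C := by
  rw [incGraph, SimpleGraph.fromRel_adj]
  constructor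
  · rintro ⟨-, ⟨a, B, h1, h2, h3⟩ | ⟨a, B, h1, h2, h3⟩⟩
    · injection h1 with e1; injection h2 with e2; subst e1; subst e2; exact h3
    · exact absurd h1 (by simp)
  · intro h; exact ⟨by simp, Or.inl ⟨p, C, rfl, rfl, h⟩⟩

lemma adj_inr {C : Bl} {w : P ⊕ Bl} (h : (incGraph pts).Adj (Sum.inr C) w) :
    ∃ p, w = Sum.inl p ∧ p ∈ pts C := by
  rw [incGraph, SimpleGraph.fromRel_adj] at h
  obtain ⟨-, ⟨a, B, h1, h2, h3⟩ | ⟨a, B, h1, h2, h3⟩⟩ := h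
  · exact absurd h1 (by simp)
  · injection h2 with e; subst e; exact ⟨a, h1, h3⟩

lemma adj_sides {u w : P ⊕ Bl} (h : (incGraph pts).Adj u w) :
    u.isLeft = !w.isLeft := by
  rw [incGraph, SimpleGraph.fromRel_adj] at h
  obtain ⟨-, ⟨a, B, h1, h2, -⟩ | ⟨a, B, h1, h2, -⟩⟩ := h <;> subst h1 <;> subst h2 <;> simp

lemma walk_parity {u w : P ⊕ Bl} (p : (incGraph pts).Walk u w) :
    (u.isLeft = w.isLeft) ↔ Even p.length := by
  induction p with
  | nil => simp
  | @cons a m c h q ih =>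
    have hs := adj_sides h
    rw [SimpleGraph.Walk.length_cons, Nat.even_add_one, ← ih, hs]
    cases m.isLeft <;> cases c.isLeft <;> simp

lemma dist_parity {u w : P ⊕ Bl} (h : (incGraph pts).Reachable u w) :
    (u.isLeft = w.isLeft) ↔ Even ((incGraph pts).dist u w) := by
  obtain ⟨p, hp⟩ := h.exists_walk_length_eq_dist
  rw [← hp]; exact walk_parity p

lemma common_of_walk2 {C C' : Bl} (w : (incGraph pts).Walk (Sum.inr C) (Sum.inr C'))
    (hw : w.length = 2) : ∃ q : P, q ∈ pts C ∧ q ∈ pts C' := by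
  cases w with
  | nil => simp at hw
  | @cons _ m _ h w' =>
    cases w' with
    | nil => simp at hw
    | @cons _ m2 _ h' w'' =>
      simp only [SimpleGraph.Walk.length_cons] at hw
      have h0 : w''.length = 0 := by omega
      have hm2 := SimpleGraph.Walk.eq_of_length_eq_zero h0
      subst hm2
      obtain ⟨q, rfl, hq⟩ := adj_inr h
      exact ⟨q, hq, inc_adj.mp h'⟩

end helpers

lemma count_meets {P Bl : Type} [Fintype Bl] [DecidableEq P] [DecidableEq Bl]
    (pts : Bl → Finset P) (r k y : ℕ)
    (hk : ∀ C, (pts C).card = k) (hr : ∀ p, (blocksThru pts p).card = r)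
    (hqs : ∀ C C' : Bl, C ≠ C' → (pts C ∩ pts C').card = 0 ∨ (pts C ∩ pts C').card = y)
    (C : Bl) :
    y * ((univ.erase C).filter (fun C' => (pts C ∩ pts C').Nonempty)).card = k * (r - 1) := by
  have key : ∑ C' ∈ univ.erase C, (pts C ∩ pts C').card = k * (r - 1) := by
    have hterm : ∀ C', (pts C ∩ pts C').card
        = ∑ q ∈ pts C, if q ∈ pts C' then 1 else 0 := by
      intro C'
      rw [sum_boole]
      congr 1
    calc ∑ C' ∈ univ.erase C, (pts C ∩ pts C').card
        = ∑ C' ∈ univ.erase C, ∑ q ∈ pts C, if q ∈ pts C' then 1 else 0 := by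
          exact Finset.sum_congr rfl (fun C' _ => hterm C')
      _ = ∑ q ∈ pts C, ∑ C' ∈ univ.erase C, if q ∈ pts C' then 1 else 0 :=
          Finset.sum_comm
      _ = ∑ q ∈ pts C, (r - 1) := by
          refine Finset.sum_congr rfl (fun q hq => ?_)
          rw [sum_boole]
          rw [filter_erase]
          have hmem : C ∈ univ.filter (fun C' => q ∈ pts C') := by
            simp [hq]
          rw [Finset.card_erase_of_mem hmem]
          have : (univ.filter (fun C' => q ∈ pts C')) = blocksThru pts q := rfl
          rw [this, hr q, Nat.cast_id]
      _ = k * (r - 1) := by rw [Finset.sum_const, hk, smul_eq_mul]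
  rw [← key]
  rw [← Finset.sum_filter_of_ne (p := fun C' => (pts C ∩ pts C').Nonempty)
      (fun x _ hx => Finset.card_pos.mp (Nat.pos_of_ne_zero hx))]
  rw [Finset.sum_congr rfl (fun C' hC' => ?_), Finset.sum_const, smul_eq_mul, mul_comm]
  obtain ⟨hC'e, hC'n⟩ := Finset.mem_filter.mp hC'
  rcases hqs C C' (Ne.symm (Finset.mem_erase.mp hC'e).1) with h0 | hy
  · exact absurd (Finset.card_eq_zero.mp h0) hC'n.ne_empty
  · exact hy

lemma exists_disjoint {P Bl : Type} [Fintype Bl] [DecidableEq P] [DecidableEq Bl]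
    (pts : Bl → Finset P) (r k y : ℕ)
    (hk : ∀ C, (pts C).card = k) (hr : ∀ p, (blocksThru pts p).card = r)
    (hqs : ∀ C C' : Bl, C ≠ C' → (pts C ∩ pts C').card = 0 ∨ (pts C ∩ pts C').card = y)
    (hx0 : ∃ C C' : Bl, C ≠ C' ∧ (pts C ∩ pts C').card = 0) (hy : 0 < y)
    (C : Bl) : ∃ C', C ≠ C' ∧ pts C ∩ pts C' = ∅ := by
  obtain ⟨D, D', hDD, hD0⟩ := hx0
  have hb2 : 2 ≤ Fintype.card Bl := Fintype.one_lt_card_iff_nontrivial.mpr ⟨D, D', hDD⟩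
  have hmc := count_meets pts r k y hk hr hqs C
  have hmd := count_meets pts r k y hk hr hqs D
  set filC := (univ.erase C).filter (fun C' => (pts C ∩ pts C').Nonempty) with hfilC
  set filD := (univ.erase D).filter (fun C' => (pts D ∩ pts C').Nonempty) with hfilD
  have heq : filC.card = filD.card :=
    Nat.eq_of_mul_eq_mul_left hy (by rw [hmc, hmd])
  have hsub : filD ⊆ (univ.erase D').erase D := by
    intro X hX
    obtain ⟨hXe, hXn⟩ := Finset.mem_filter.mp hX
    obtain ⟨hXD, -⟩ := Finset.mem_erase.mp hXe
    refine Finset.mem_erase.mpr ⟨hXD, Finset.mem_erase.mpr ⟨?_, Finset.mem_univ X⟩⟩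
    rintro rfl
    exact hXn.ne_empty (Finset.card_eq_zero.mp hD0)
  have hcardD : filD.card ≤ Fintype.card Bl - 2 := by
    refine le_trans (Finset.card_le_card hsub) ?_
    rw [Finset.card_erase_of_mem (Finset.mem_erase.mpr ⟨hDD, Finset.mem_univ D⟩),
      Finset.card_erase_of_mem (Finset.mem_univ D'), Finset.card_univ]
    omega
  have hlt : filC.card < (univ.erase C).card := by
    rw [Finset.card_erase_of_mem (Finset.mem_univ C), Finset.card_univ]
    omega
  have hss : filC ⊂ univ.erase C :=
    ⟨Finset.filter_subset _ _, fun h => absurd (Finset.card_le_card h) (by omega)⟩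
  obtain ⟨C', hC'mem, hC'not⟩ := Finset.exists_of_ssubset hss
  refine ⟨C', Ne.symm (Finset.mem_erase.mp hC'mem).1, ?_⟩
  rw [← Finset.not_nonempty_iff_eq_empty]
  intro hne
  exact hC'not (Finset.mem_filter.mpr ⟨hC'mem, hne⟩)

/-- every block has eccentricity exactly 4 in the incidence graph;
two blocks are at distance 2 iff they intersect and at distance 4 iff they are
disjoint; a point is at distance 1 from a block containing it and 3 otherwise. -/
theorem stmt7
    {P Bl : Type} [Fintype P] [Fintype Bl] [DecidableEq P] [DecidableEq Bl]
    (pts : Bl → Finset P) (v b r k t lam y : ℕ)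
    (hv : Fintype.card P = v) (hb : Fintype.card Bl = b)
    (hk : ∀ C : Bl, (pts C).card = k)
    (hr : ∀ p : P, (blocksThru pts p).card = r)
    (hlam : ∀ p q : P, p ≠ q → lamCount pts p q = lam ∨ lamCount pts p q = 0)
    (hflag : ∀ (p : P) (C : Bl), p ∈ pts C →
      ((pts C).filter (fun q => q ≠ p ∧ lamCount pts p q = lam)).card = k - 1)
    (hnonflag : ∀ (p : P) (C : Bl), p ∉ pts C →
      ((pts C).filter (fun q => lamCount pts p q = lam)).card = t)
    (hqs : ∀ C C' : Bl, C ≠ C' →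
      (pts C ∩ pts C').card = 0 ∨ (pts C ∩ pts C').card = y)
    (hx0 : ∃ C C' : Bl, C ≠ C' ∧ (pts C ∩ pts C').card = 0)
    (hy0 : ∃ C C' : Bl, C ≠ C' ∧ (pts C ∩ pts C').card = y)
    (hkv : k < v) (hrb : r < b) (ht : 1 ≤ t) (htk : t < k) (hlam1 : 1 ≤ lam)
    (hy : 0 < y)
    : (∀ C : Bl,
        (∀ w : P ⊕ Bl, (incGraph pts).Reachable (Sum.inr C) w) ∧
        (∀ w : P ⊕ Bl, (incGraph pts).dist (Sum.inr C) w ≤ 4) ∧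
        (∃ w : P ⊕ Bl, (incGraph pts).dist (Sum.inr C) w = 4)) ∧
      (∀ C C' : Bl, C ≠ C' →
        ((incGraph pts).dist (Sum.inr C) (Sum.inr C') = 2 ↔ (pts C ∩ pts C').Nonempty) ∧
        ((incGraph pts).dist (Sum.inr C) (Sum.inr C') = 4 ↔ pts C ∩ pts C' = ∅)) ∧
      (∀ (p : P) (C : Bl),
        (p ∈ pts C → (incGraph pts).dist (Sum.inl p) (Sum.inr C) = 1) ∧
        (p ∉ pts C → (incGraph pts).dist (Sum.inl p) (Sum.inr C) = 3)) := by
  -- from a non-flag, get a collinear point on the block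
  have collinear : ∀ (p : P) (C : Bl), p ∉ pts C →
      ∃ q C'', q ∈ pts C ∧ p ∈ pts C'' ∧ q ∈ pts C'' := by
    intro p C hpC
    have hcard := hnonflag p C hpC
    have hne : ((pts C).filter (fun q => lamCount pts p q = lam)).Nonempty := by
      rw [← Finset.card_pos, hcard]; omega
    obtain ⟨q, hq⟩ := hne
    obtain ⟨hqC, hqlam⟩ := Finset.mem_filter.mp hq
    have hpos : 0 < lamCount pts p q := by omega
    obtain ⟨C'', hC''⟩ := Finset.card_pos.mp hpos
    obtain ⟨h1, h2⟩ := Finset.mem_inter.mp hC''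
    exact ⟨q, C'', hqC, (Finset.mem_filter.mp h1).2, (Finset.mem_filter.mp h2).2⟩
  -- fact A
  have factA : ∀ (p : P) (C : Bl), p ∈ pts C →
      (incGraph pts).dist (Sum.inl p) (Sum.inr C) = 1 := fun p C h =>
    SimpleGraph.dist_eq_one_iff_adj.mpr (inc_adj.mpr h)
  -- fact B
  have factB : ∀ (p : P) (C : Bl), p ∉ pts C →
      (incGraph pts).dist (Sum.inl p) (Sum.inr C) = 3 := by
    intro p C hpC
    obtain ⟨q, C'', hqC, hpC'', hqC''⟩ := collinear p C hpC
    let w : (incGraph pts).Walk (Sum.inl p) (Sum.inr C) :=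
      .cons (inc_adj.mpr hpC'') (.cons (inc_adj.mpr hqC'').symm
        (.cons (inc_adj.mpr hqC) .nil))
    have hwlen : w.length = 3 := rfl
    have hle : (incGraph pts).dist (Sum.inl p) (Sum.inr C) ≤ 3 :=
      hwlen ▸ SimpleGraph.dist_le w
    have hreach : (incGraph pts).Reachable (Sum.inl p) (Sum.inr C) := ⟨w⟩
    have hodd : ¬ Even ((incGraph pts).dist (Sum.inl p) (Sum.inr C)) := by
      rw [← dist_parity hreach]; simp
    have hne1 : (incGraph pts).dist (Sum.inl p) (Sum.inr C) ≠ 1 := by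
      intro h
      exact hpC (inc_adj.mp (SimpleGraph.dist_eq_one_iff_adj.mp h))
    rw [Nat.not_even_iff] at hodd
    omega
  -- fact C
  have factC : ∀ C C' : Bl, C ≠ C' → (pts C ∩ pts C').Nonempty →
      (incGraph pts).dist (Sum.inr C) (Sum.inr C') = 2 := by
    intro C C' hne ⟨q, hq⟩
    obtain ⟨h1, h2⟩ := Finset.mem_inter.mp hq
    let w : (incGraph pts).Walk (Sum.inr C) (Sum.inr C') :=
      .cons (inc_adj.mpr h1).symm (.cons (inc_adj.mpr h2) .nil)
    have hwlen : w.length = 2 := rfl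
    have hle : (incGraph pts).dist (Sum.inr C) (Sum.inr C') ≤ 2 :=
      hwlen ▸ SimpleGraph.dist_le w
    have hreach : (incGraph pts).Reachable (Sum.inr C) (Sum.inr C') := ⟨w⟩
    have heven : Even ((incGraph pts).dist (Sum.inr C) (Sum.inr C')) := by
      rw [← dist_parity hreach]
      rfl
    have hne0 : (incGraph pts).dist (Sum.inr C) (Sum.inr C') ≠ 0 := by
      intro h0
      exact hne (by injection hreach.dist_eq_zero_iff.mp h0)
    rw [Nat.even_iff] at heven
    omega
  -- fact D
  have factD : ∀ C C' : Bl, C ≠ C' → pts C ∩ pts C' = ∅ →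
      (incGraph pts).dist (Sum.inr C) (Sum.inr C') = 4 := by
    intro C C' hne hempty
    have hq : (pts C).Nonempty := by rw [← Finset.card_pos, hk]; omega
    obtain ⟨q, hqC⟩ := hq
    have hqC' : q ∉ pts C' := by
      intro h
      have : q ∈ pts C ∩ pts C' := Finset.mem_inter.mpr ⟨hqC, h⟩
      rw [hempty] at this; exact absurd this (Finset.notMem_empty q)
    obtain ⟨q', C'', hq'C', hqC'', hq'C''⟩ := collinear q C' hqC'
    let w : (incGraph pts).Walk (Sum.inr C) (Sum.inr C') :=
      .cons (inc_adj.mpr hqC).symm (.cons (inc_adj.mpr hqC'')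
        (.cons (inc_adj.mpr hq'C'').symm (.cons (inc_adj.mpr hq'C') .nil)))
    have hwlen : w.length = 4 := rfl
    have hle : (incGraph pts).dist (Sum.inr C) (Sum.inr C') ≤ 4 :=
      hwlen ▸ SimpleGraph.dist_le w
    have hreach : (incGraph pts).Reachable (Sum.inr C) (Sum.inr C') := ⟨w⟩
    have heven : Even ((incGraph pts).dist (Sum.inr C) (Sum.inr C')) := by
      rw [← dist_parity hreach]
      rfl
    have hne0 : (incGraph pts).dist (Sum.inr C) (Sum.inr C') ≠ 0 := by
      intro h0
      exact hne (by injection hreach.dist_eq_zero_iff.mp h0)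
    have hne2 : (incGraph pts).dist (Sum.inr C) (Sum.inr C') ≠ 2 := by
      intro h2
      obtain ⟨w2, hw2⟩ := hreach.exists_walk_length_eq_dist
      rw [h2] at hw2
      obtain ⟨x, hx1, hx2⟩ := common_of_walk2 w2 hw2
      have : x ∈ pts C ∩ pts C' := Finset.mem_inter.mpr ⟨hx1, hx2⟩
      rw [hempty] at this; exact absurd this (Finset.notMem_empty x)
    rw [Nat.even_iff] at heven
    omega
  -- distance from a block to any vertex
  have distBlock : ∀ (C : Bl) (w : P ⊕ Bl),
      (incGraph pts).dist (Sum.inr C) w ≤ 4 ∧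
      ((incGraph pts).dist (Sum.inr C) w ≠ 0 ∨ Sum.inr C = w) := by
    intro C w
    cases w with
    | inl p =>
      rw [SimpleGraph.dist_comm]
      by_cases hp : p ∈ pts C
      · rw [factA p C hp]; omega
      · rw [factB p C hp]; omega
    | inr C' =>
      by_cases hC : C = C'
      · subst hC; rw [SimpleGraph.dist_self]; exact ⟨by omega, Or.inr rfl⟩
      · rcases hqs C C' hC with h0 | hy'
        · rw [factD C C' hC (Finset.card_eq_zero.mp h0)]; omega
        · have : (pts C ∩ pts C').Nonempty := by
            rw [← Finset.card_pos, hy']; omega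
          rw [factC C C' hC this]; omega
  refine ⟨?_, ?_, ?_⟩
  · intro C
    refine ⟨?_, fun w => (distBlock C w).1, ?_⟩
    · intro w
      rcases (distBlock C w).2 with h | h
      · exact SimpleGraph.Reachable.of_dist_ne_zero h
      · rw [h]
    · obtain ⟨C', hne, hempty⟩ := exists_disjoint pts r k y hk hr hqs hx0 hy C
      exact ⟨Sum.inr C', factD C C' hne hempty⟩
  · intro C C' hne
    constructor
    · constructor
      · intro h2
        by_contra hnon
        rw [Finset.not_nonempty_iff_eq_empty] at hnon
        rw [factD C C' hne hnon] at h2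
        omega
      · exact factC C C' hne
    · constructor
      · intro h4
        by_contra hnon
        rw [← Ne, ← Finset.nonempty_iff_ne_empty] at hnon
        rw [factC C C' hne hnon] at h4
        omega
      · exact factD C C' hne
  · intro p C
    exact ⟨factA p C, factB p C⟩
end

section
/- Let Γ be a bipartite distance-regularized graph in which every vertex of one color class Y has eccentricity D ≥ 3 and intersection numbers bᵢ, cᵢ, and vertices of the other class Y' have intersection numbers b'ᵢ, c'ᵢ. Then for every x ∈ Y, every i with 2 ≤ i ≤ D−1, and every vertex z at distance i from x, the cardinality |Γ₂(x) ∩ Γᵢ(z)| equals (bᵢ(cᵢ₊₁−1) + cᵢ(bᵢ₋₁−1))/c₂ if i is even, and (b'ᵢ(c'ᵢ₊₁−1) + c'ᵢ(b'ᵢ₋₁−1))/c₂ if i is odd; in particular this number is independent of the choice of x and z. -/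
open SimpleGraph Finset

private lemma stmt9_card_filter_eq_ncard {V : Type} [Fintype V] (P : V → Prop) [DecidablePred P] :
    (Finset.univ.filter P).card = {v | P v}.ncard := by
  rw [Set.ncard_eq_toFinset_card']
  congr 1
  ext v
  simp

private lemma stmt9_walk_parity {V : Type} (G : SimpleGraph V) (Y : Set V)
    (hbip : ∀ u w : V, G.Adj u w → (u ∈ Y ↔ w ∉ Y)) :
    ∀ {u v : V} (p : G.Walk u v), ((u ∈ Y) ↔ (v ∈ Y)) ↔ Even p.length := by
  intro u v p
  induction p with
  | nil => simp
  | cons h q ih =>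
    have hb := hbip _ _ h
    simp only [SimpleGraph.Walk.length_cons, Nat.even_add_one]
    tauto

private lemma stmt9_dist_parity {V : Type} (G : SimpleGraph V) (Y : Set V) (hconn : G.Connected)
    (hbip : ∀ u w : V, G.Adj u w → (u ∈ Y ↔ w ∉ Y)) (u v : V) :
    ((u ∈ Y) ↔ (v ∈ Y)) ↔ Even (G.dist u v) := by
  obtain ⟨p, hp⟩ := hconn.exists_walk_length_eq_dist u v
  rw [← hp]
  exact stmt9_walk_parity G Y hbip p

private lemma stmt9_closer {V : Type} (G : SimpleGraph V) (hconn : G.Connected) (n : ℕ) (u v : V)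
    (h : G.dist u v = n + 1) : ∃ y, G.Adj v y ∧ G.dist u y = n := by
  obtain ⟨p, hp⟩ := hconn.exists_walk_length_eq_dist v u
  rw [SimpleGraph.dist_comm, h] at hp
  cases p with
  | nil => simp at hp
  | @cons _ y _ ha q =>
    refine ⟨y, ha, le_antisymm ?_ ?_⟩
    · calc G.dist u y = G.dist y u := SimpleGraph.dist_comm
        _ ≤ q.length := SimpleGraph.dist_le q
        _ = n := by simpa using hp
    · have h1 : G.dist u v ≤ G.dist u y + G.dist y v := hconn.dist_triangle
      have h2 : G.dist y v = 1 := SimpleGraph.dist_eq_one_iff_adj.mpr ha.symm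
      omega

private lemma stmt9_exists_dist_two {V : Type} (G : SimpleGraph V) (hconn : G.Connected) (x : V) :
    ∀ n (z : V), G.dist x z = n + 2 → ∃ w, G.dist x w = 2 := by
  intro n
  induction n with
  | zero => exact fun z h => ⟨z, h⟩
  | succ k ih =>
    intro z h
    obtain ⟨y, _, hy⟩ := stmt9_closer G hconn (k + 2) x z (by omega)
    exact ih y hy

private lemma stmt9_step_dist {V : Type} (G : SimpleGraph V) (Y : Set V) (hconn : G.Connected)
    (hbip : ∀ u w : V, G.Adj u w → (u ∈ Y ↔ w ∉ Y)) {u v : V} (h : G.Adj u v) (z : V) :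
    G.dist z v = G.dist z u + 1 ∨ G.dist z u = G.dist z v + 1 := by
  have h1 : G.dist z v ≤ G.dist z u + 1 := by
    have ht := hconn.dist_triangle (u := z) (v := u) (w := v)
    have hd : G.dist u v = 1 := SimpleGraph.dist_eq_one_iff_adj.mpr h
    omega
  have h2 : G.dist z u ≤ G.dist z v + 1 := by
    have ht := hconn.dist_triangle (u := z) (v := v) (w := u)
    have hd : G.dist v u = 1 := SimpleGraph.dist_eq_one_iff_adj.mpr h.symm
    omega
  have hne : G.dist z u ≠ G.dist z v := by
    intro he
    have p1 := stmt9_dist_parity G Y hconn hbip z u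
    have p2 := stmt9_dist_parity G Y hconn hbip z v
    have hb := hbip _ _ h
    rw [he] at p1
    tauto
  omega



/-- in a bipartite distance-regularized graph where every vertex of
the color class Y has eccentricity D ≥ 3, for x ∈ Y, 2 ≤ i ≤ D−1 and z at
distance i from x, the number |Γ₂(x) ∩ Γᵢ(z)| equals
(bᵢ(cᵢ₊₁−1)+cᵢ(bᵢ₋₁−1))/c₂ for even i and (b'ᵢ(c'ᵢ₊₁−1)+c'ᵢ(b'ᵢ₋₁−1))/c₂
for odd i; in particular it does not depend on the choice of x and z. -/
theorem stmt9 {V : Type} [Fintype V] (G : SimpleGraph V) (Y : Set V)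
    (hconn : G.Connected)
    (hbip : ∀ u w : V, G.Adj u w → (u ∈ Y ↔ w ∉ Y))
    (c b c' b' : ℕ → ℕ) (D : ℕ) (hD : 3 ≤ D)
    (heccY : ∀ x ∈ Y, (∀ w : V, G.dist x w ≤ D) ∧ ∃ w : V, G.dist x w = D)
    (hregY : ∀ x ∈ Y, ∀ i : ℕ, ∀ z : V, G.dist x z = i →
      ({w : V | G.Adj z w ∧ G.dist x w = i - 1}).ncard = c i ∧
      ({w : V | G.Adj z w ∧ G.dist x w = i + 1}).ncard = b i)
    (hregY' : ∀ x : V, x ∉ Y → ∀ i : ℕ, ∀ z : V, G.dist x z = i →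
      ({w : V | G.Adj z w ∧ G.dist x w = i - 1}).ncard = c' i ∧
      ({w : V | G.Adj z w ∧ G.dist x w = i + 1}).ncard = b' i) :
    ∀ x ∈ Y, ∀ i : ℕ, 2 ≤ i → i ≤ D - 1 → ∀ z : V, G.dist x z = i →
      (({w : V | G.dist x w = 2 ∧ G.dist z w = i}).ncard : ℚ) =
        if Even i then
          ((b i : ℚ) * ((c (i + 1) : ℚ) - 1) + (c i : ℚ) * ((b (i - 1) : ℚ) - 1)) / (c 2 : ℚ)
        else
          ((b' i : ℚ) * ((c' (i + 1) : ℚ) - 1) + (c' i : ℚ) * ((b' (i - 1) : ℚ) - 1)) / (c 2 : ℚ) := by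
  intro x hx i hi2 _ z hz
  classical
  set C : ℕ → ℕ := fun j => if Even i then c j else c' j with hCdef
  set Bt : ℕ → ℕ := fun j => if Even i then b j else b' j with hBtdef
  -- regularity at z, uniform over parity
  have hzreg : ∀ j : ℕ, ∀ y : V, G.dist z y = j →
      ({w : V | G.Adj y w ∧ G.dist z w = j - 1}).ncard = C j ∧
      ({w : V | G.Adj y w ∧ G.dist z w = j + 1}).ncard = Bt j := by
    by_cases hp : Even i
    · have hzY : z ∈ Y := by
        have hpar := stmt9_dist_parity G Y hconn hbip x z
        rw [hz] at hpar
        tauto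
      intro j y hj
      simpa [hCdef, hBtdef, hp] using hregY z hzY j y hj
    · have hzY : z ∉ Y := by
        have hpar := stmt9_dist_parity G Y hconn hbip x z
        rw [hz] at hpar
        tauto
      intro j y hj
      simpa [hCdef, hBtdef, hp] using hregY' z hzY j y hj
  have hzx : G.dist z x = i := by rw [SimpleGraph.dist_comm]; exact hz
  -- c 2 is positive
  have hc2 : 0 < c 2 := by
    obtain ⟨w, hw⟩ := stmt9_exists_dist_two G hconn x (i - 2) z (by omega)
    obtain ⟨y, hay, hy⟩ := stmt9_closer G hconn 1 x w (by omega)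
    have hcard := (hregY x hx 2 w hw).1
    have h21 : (2 : ℕ) - 1 = 1 := by norm_num
    rw [h21] at hcard
    rw [← hcard]
    exact (Set.ncard_pos (Set.toFinite _)).mpr ⟨y, hay, hy⟩
  -- for y adjacent to x, the full set vs the small set
  have hyfull : ∀ y : V, G.Adj x y →
      ({w : V | G.Adj y w ∧ G.dist z w = i}).ncard
        = ({w : V | G.Adj y w ∧ G.dist x w = 2 ∧ G.dist z w = i}).ncard + 1 := by
    intro y hay
    have hset : {w : V | G.Adj y w ∧ G.dist z w = i}
        = insert x {w : V | G.Adj y w ∧ G.dist x w = 2 ∧ G.dist z w = i} := by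
      ext w
      simp only [Set.mem_insert_iff, Set.mem_setOf_eq]
      constructor
      · rintro ⟨haw, hdw⟩
        by_cases hwx : w = x
        · exact Or.inl hwx
        · right
          refine ⟨haw, ?_, hdw⟩
          have h1 : G.dist x w ≤ 2 := by
            have ht := hconn.dist_triangle (u := x) (v := y) (w := w)
            have hd1 : G.dist x y = 1 := SimpleGraph.dist_eq_one_iff_adj.mpr hay
            have hd2 : G.dist y w = 1 := SimpleGraph.dist_eq_one_iff_adj.mpr haw
            omega
          have heven : Even (G.dist x w) := by
            have hpar := stmt9_dist_parity G Y hconn hbip x w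
            have b1 := hbip _ _ hay
            have b2 := hbip _ _ haw
            tauto
          have hne : G.dist x w ≠ 0 := fun h0 =>
            hwx ((hconn.dist_eq_zero_iff).mp h0).symm
          rcases heven with ⟨k, hk⟩
          omega
      · rintro (rfl | ⟨haw, _, hdw⟩)
        · exact ⟨hay.symm, hzx⟩
        · exact ⟨haw, hdw⟩
    rw [hset, Set.ncard_insert_of_notMem (by simp [SimpleGraph.dist_self]) (Set.toFinite _)]
  -- case-split per neighbour y of x
  have hysmall : ∀ y : V, G.Adj x y →
      ({w : V | G.Adj y w ∧ G.dist x w = 2 ∧ G.dist z w = i}).ncard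
        = if G.dist z y = i + 1 then C (i + 1) - 1 else Bt (i - 1) - 1 := by
    intro y hay
    rcases stmt9_step_dist G Y hconn hbip hay z with hcase | hcase
    · rw [hzx] at hcase
      rw [if_pos hcase]
      have hfull := (hzreg (i + 1) y hcase).1
      simp only [Nat.add_sub_cancel] at hfull
      rw [hyfull y hay] at hfull
      omega
    · rw [hzx] at hcase
      have hdy : G.dist z y = i - 1 := by omega
      rw [if_neg (by omega)]
      have hfull := (hzreg (i - 1) y hdy).2
      have hi1 : i - 1 + 1 = i := by omega
      rw [hi1] at hfull
      rw [hyfull y hay] at hfull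
      omega
  -- cardinalities of A and B
  have hA : ({y : V | G.Adj x y ∧ G.dist z y = i + 1}).ncard = Bt i := (hzreg i x hzx).2
  have hB : ({y : V | G.Adj x y ∧ G.dist z y = i - 1}).ncard = C i := by
    have := (hzreg i x hzx).1
    exact this
  -- lower bounds
  have hB1 : 1 ≤ Bt (i - 1) := by
    obtain ⟨y, hay, hdy⟩ := stmt9_closer G hconn (i - 1) z x (by omega)
    have hfull := (hzreg (i - 1) y hdy).2
    have hi1 : i - 1 + 1 = i := by omega
    rw [hi1, hyfull y hay] at hfull
    omega
  have hC1 : Bt i ≠ 0 → 1 ≤ C (i + 1) := by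
    intro ha
    rw [← hA] at ha
    obtain ⟨y, hay, hdy⟩ := Set.nonempty_of_ncard_ne_zero ha
    have hfull := (hzreg (i + 1) y hdy).1
    simp only [Nat.add_sub_cancel] at hfull
    rw [hyfull y hay] at hfull
    omega
  -- the double count
  have hcount : ({w : V | G.dist x w = 2 ∧ G.dist z w = i}).ncard * c 2
      = Bt i * (C (i + 1) - 1) + C i * (Bt (i - 1) - 1) := by
    have e1 : ∀ w : V, (∑ y : V,
        if G.Adj y w ∧ G.dist x y = 1 ∧ G.dist x w = 2 ∧ G.dist z w = i then 1 else 0)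
        = if G.dist x w = 2 ∧ G.dist z w = i then c 2 else 0 := by
      intro w
      by_cases hw : G.dist x w = 2 ∧ G.dist z w = i
      · rw [if_pos hw]
        have hc := (hregY x hx 2 w hw.1).1
        have h21 : (2 : ℕ) - 1 = 1 := by norm_num
        rw [h21] at hc
        rw [← hc, ← Finset.card_filter, stmt9_card_filter_eq_ncard]
        congr 1
        ext y
        simp only [Set.mem_setOf_eq]
        constructor
        · rintro ⟨h1, h2, _⟩; exact ⟨h1.symm, h2⟩
        · rintro ⟨h1, h2⟩; exact ⟨h1.symm, h2, hw.1, hw.2⟩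
      · rw [if_neg hw]
        exact Finset.sum_eq_zero fun y _ => by rw [if_neg (by tauto)]
    have e2 : ∀ y : V, (∑ w : V,
        if G.Adj y w ∧ G.dist x y = 1 ∧ G.dist x w = 2 ∧ G.dist z w = i then 1 else 0)
        = (if G.Adj x y ∧ G.dist z y = i + 1 then C (i + 1) - 1 else 0)
          + (if G.Adj x y ∧ G.dist z y = i - 1 then Bt (i - 1) - 1 else 0) := by
      intro y
      by_cases hay : G.Adj x y
      · have hd1 : G.dist x y = 1 := SimpleGraph.dist_eq_one_iff_adj.mpr hay
        have hsum : (∑ w : V,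
            if G.Adj y w ∧ G.dist x y = 1 ∧ G.dist x w = 2 ∧ G.dist z w = i then 1 else 0)
            = ({w : V | G.Adj y w ∧ G.dist x w = 2 ∧ G.dist z w = i}).ncard := by
          rw [← stmt9_card_filter_eq_ncard, Finset.card_filter]
          exact Finset.sum_congr rfl fun w _ => by
            congr 1
            simp only [eq_iff_iff]
            tauto
        rw [hsum, hysmall y hay]
        rcases stmt9_step_dist G Y hconn hbip hay z with hcase | hcase <;> rw [hzx] at hcase
        · rw [if_pos hcase, if_pos ⟨hay, hcase⟩, if_neg (fun hc => absurd hc.2 (by omega))]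
          omega
        · rw [if_neg (by omega), if_neg (fun hc => absurd hc.2 (by omega)),
            if_pos ⟨hay, by omega⟩]
          omega
      · rw [if_neg (fun hc => hay hc.1), if_neg (fun hc => hay hc.1),
          Finset.sum_eq_zero fun w _ => by
            rw [if_neg (fun hc => hay (SimpleGraph.dist_eq_one_iff_adj.mp hc.2.1))]]
        omega
    calc ({w : V | G.dist x w = 2 ∧ G.dist z w = i}).ncard * c 2
        = ∑ w : V, if G.dist x w = 2 ∧ G.dist z w = i then c 2 else 0 := by
          rw [← Finset.sum_filter, Finset.sum_const, smul_eq_mul, stmt9_card_filter_eq_ncard]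
      _ = ∑ w : V, ∑ y : V,
            (if G.Adj y w ∧ G.dist x y = 1 ∧ G.dist x w = 2 ∧ G.dist z w = i then 1 else 0) := by
          exact Finset.sum_congr rfl fun w _ => (e1 w).symm
      _ = ∑ y : V, ∑ w : V,
            (if G.Adj y w ∧ G.dist x y = 1 ∧ G.dist x w = 2 ∧ G.dist z w = i then 1 else 0) :=
          Finset.sum_comm
      _ = ∑ y : V, ((if G.Adj x y ∧ G.dist z y = i + 1 then C (i + 1) - 1 else 0)
            + (if G.Adj x y ∧ G.dist z y = i - 1 then Bt (i - 1) - 1 else 0)) :=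
          Finset.sum_congr rfl fun y _ => e2 y
      _ = Bt i * (C (i + 1) - 1) + C i * (Bt (i - 1) - 1) := by
          rw [Finset.sum_add_distrib, ← Finset.sum_filter, ← Finset.sum_filter,
            Finset.sum_const, Finset.sum_const, smul_eq_mul, smul_eq_mul,
            stmt9_card_filter_eq_ncard, stmt9_card_filter_eq_ncard, hA, hB]
  -- pass to ℚ
  have hcast1 : ((Bt i * (C (i + 1) - 1) : ℕ) : ℚ) = (Bt i : ℚ) * ((C (i + 1) : ℚ) - 1) := by
    by_cases ha : Bt i = 0
    · simp [ha]
    · rw [Nat.cast_mul, Nat.cast_sub (hC1 ha), Nat.cast_one]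
  have hcast2 : ((C i * (Bt (i - 1) - 1) : ℕ) : ℚ)
      = (C i : ℚ) * ((Bt (i - 1) : ℚ) - 1) := by
    rw [Nat.cast_mul, Nat.cast_sub hB1, Nat.cast_one]
  have hmain : (({w : V | G.dist x w = 2 ∧ G.dist z w = i}).ncard : ℚ)
      = ((Bt i : ℚ) * ((C (i + 1) : ℚ) - 1) + (C i : ℚ) * ((Bt (i - 1) : ℚ) - 1)) / (c 2 : ℚ) := by
    rw [eq_div_iff (by exact_mod_cast hc2.ne')]
    calc (({w : V | G.dist x w = 2 ∧ G.dist z w = i}).ncard : ℚ) * (c 2 : ℚ)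
        = ((({w : V | G.dist x w = 2 ∧ G.dist z w = i}).ncard * c 2 : ℕ) : ℚ) := by push_cast; ring
      _ = ((Bt i * (C (i + 1) - 1) + C i * (Bt (i - 1) - 1) : ℕ) : ℚ) := by rw [hcount]
      _ = (Bt i : ℚ) * ((C (i + 1) : ℚ) - 1) + (C i : ℚ) * ((Bt (i - 1) : ℚ) - 1) := by
          rw [Nat.cast_add, hcast1, hcast2]
  by_cases hp : Even i
  · rw [if_pos hp]
    simpa [hCdef, hBtdef, hp] using hmain
  · rw [if_neg hp]
    simpa [hCdef, hBtdef, hp] using hmain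
end

section
/- Let Γ be a bipartite distance-regularized graph with color classes Y, Y' in which every vertex (in both classes) has eccentricity 4, with intersection numbers bᵢ, cᵢ for Y and b'ᵢ, c'ᵢ for Y'. Then the incidence structure with point set Y, block set Y', and incidence given by adjacency is a quasi-symmetric SPBIBD with parameters (1 + b₀b₁/c₂ + b₀b₁b₂b₃/(c₂c₃c₄), b₀ + b₀b₁b₂/(c₂c₃), b₀', b₀, c₂, 0) of type (b₁, c₃) with block intersection numbers x = 0 and y = c'₂: any two distinct blocks (vertices of Y') share either 0 or exactly c'₂ common neighbours, and both cases occur. -/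
open SimpleGraph Finset

private lemma walk_parity_s17 {V : Type} {G : SimpleGraph V} {Y : Set V}
    (hbip : ∀ u w : V, G.Adj u w → (u ∈ Y ↔ w ∉ Y)) :
    ∀ {u v : V} (p : G.Walk u v), Even p.length ↔ (u ∈ Y ↔ v ∈ Y) := by
  intro u v p
  induction p with
  | nil => simp
  | @cons a b c h q ih =>
    rw [Walk.length_cons, Nat.even_add_one, ih]
    have := hbip _ _ h
    tauto

private lemma dist_parity_s17 {V : Type} {G : SimpleGraph V} {Y : Set V}
    (hconn : G.Connected) (hbip : ∀ u w : V, G.Adj u w → (u ∈ Y ↔ w ∉ Y)) (u v : V) :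
    Even (G.dist u v) ↔ (u ∈ Y ↔ v ∈ Y) := by
  obtain ⟨p, hp⟩ := hconn.exists_walk_length_eq_dist u v
  rw [← hp]; exact walk_parity_s17 hbip p

private lemma exists_pred {V : Type} {G : SimpleGraph V} (hconn : G.Connected) {x w : V} {n : ℕ}
    (h : G.dist x w = n + 1) : ∃ z, G.Adj w z ∧ G.dist x z = n := by
  obtain ⟨p, hp⟩ := hconn.exists_walk_length_eq_dist w x
  rw [dist_comm] at hp
  cases p with
  | nil => rw [SimpleGraph.dist_self] at h; simp at h
  | @cons a b c hab q =>
    refine ⟨b, hab, ?_⟩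
    have h1 : G.dist x b ≤ n := by
      have := dist_le q.reverse
      simp only [Walk.length_reverse] at this
      rw [Walk.length_cons] at hp
      omega
    have h2 : G.dist x w ≤ G.dist x b + G.dist b w := hconn.dist_triangle
    have h3 : G.dist b w = 1 := dist_eq_one_iff_adj.mpr hab.symm
    omega

private lemma ncard_setOf_eq {V : Type} [Fintype V] (p : V → Prop) [DecidablePred p] :
    {v | p v}.ncard = (Finset.univ.filter p).card := by
  rw [Set.ncard_eq_toFinset_card']
  simp [Set.toFinset_setOf]

private lemma ncard_mul_eq {V : Type} [Fintype V] (P Q : V → Prop) (R : V → V → Prop)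
    (hsymm : ∀ z w, R z w → R w z) (m n : ℕ)
    (hm : ∀ z, P z → {w | R z w ∧ Q w}.ncard = m)
    (hn : ∀ w, Q w → {z | R w z ∧ P z}.ncard = n) :
    {z | P z}.ncard * m = {w | Q w}.ncard * n := by
  classical
  have key : ∀ (P Q : V → Prop) (R : V → V → Prop) (m : ℕ),
      (∀ z, P z → {w | R z w ∧ Q w}.ncard = m) →
      {z | P z}.ncard * m =
        ∑ z : V, ∑ w : V, if P z ∧ R z w ∧ Q w then 1 else 0 := by
    intro P Q R m hm
    rw [ncard_setOf_eq, Finset.card_filter, Finset.sum_mul]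
    refine Finset.sum_congr rfl fun z _ => ?_
    by_cases hz : P z
    · simp only [hz, if_true, true_and, one_mul]
      rw [← hm z hz, ncard_setOf_eq, Finset.card_filter]
    · simp [hz]
  rw [key P Q R m hm, key Q P (fun a b => R a b) n hn, Finset.sum_comm]
  refine Finset.sum_congr rfl fun w _ => Finset.sum_congr rfl fun z _ => ?_
  have hiff : (P z ∧ R z w ∧ Q w) ↔ (Q w ∧ R w z ∧ P z) := by
    constructor <;> rintro ⟨a, b, c⟩ <;> exact ⟨c, hsymm _ _ b, a⟩
  rw [if_congr hiff rfl rfl]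
/-- a bipartite distance-regularized graph in which every vertex
has eccentricity 4 is the incidence graph of a quasi-symmetric SPBIBD with
parameters (1+b₀b₁/c₂+b₀b₁b₂b₃/(c₂c₃c₄), b₀+b₀b₁b₂/(c₂c₃), b₀', b₀, c₂, 0) of
type (b₁, c₃) with intersection numbers x = 0 and y = c'₂. -/
theorem stmt17 {V : Type} [Fintype V] (G : SimpleGraph V) (Y : Set V)
    (hconn : G.Connected)
    (hbip : ∀ u w : V, G.Adj u w → (u ∈ Y ↔ w ∉ Y))
    (b0 b1 b2 b3 c2 c3 c4 b0' b1' b2' b3' c2' c3' c4' : ℕ)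
    (hecc : ∀ x : V, (∀ w : V, G.dist x w ≤ 4) ∧ ∃ w : V, G.dist x w = 4)
    (hregY : ∀ x ∈ Y, ∀ z : V,
      (G.dist x z = 0 → ({w : V | G.Adj z w ∧ G.dist x w = 1}).ncard = b0) ∧
      (G.dist x z = 1 → ({w : V | G.Adj z w ∧ G.dist x w = 0}).ncard = 1 ∧
        ({w : V | G.Adj z w ∧ G.dist x w = 2}).ncard = b1) ∧
      (G.dist x z = 2 → ({w : V | G.Adj z w ∧ G.dist x w = 1}).ncard = c2 ∧
        ({w : V | G.Adj z w ∧ G.dist x w = 3}).ncard = b2) ∧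
      (G.dist x z = 3 → ({w : V | G.Adj z w ∧ G.dist x w = 2}).ncard = c3 ∧
        ({w : V | G.Adj z w ∧ G.dist x w = 4}).ncard = b3) ∧
      (G.dist x z = 4 → ({w : V | G.Adj z w ∧ G.dist x w = 3}).ncard = c4 ∧
        ({w : V | G.Adj z w ∧ G.dist x w = 5}).ncard = 0))
    (hregY' : ∀ x : V, x ∉ Y → ∀ z : V,
      (G.dist x z = 0 → ({w : V | G.Adj z w ∧ G.dist x w = 1}).ncard = b0') ∧
      (G.dist x z = 1 → ({w : V | G.Adj z w ∧ G.dist x w = 0}).ncard = 1 ∧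
        ({w : V | G.Adj z w ∧ G.dist x w = 2}).ncard = b1') ∧
      (G.dist x z = 2 → ({w : V | G.Adj z w ∧ G.dist x w = 1}).ncard = c2' ∧
        ({w : V | G.Adj z w ∧ G.dist x w = 3}).ncard = b2') ∧
      (G.dist x z = 3 → ({w : V | G.Adj z w ∧ G.dist x w = 2}).ncard = c3' ∧
        ({w : V | G.Adj z w ∧ G.dist x w = 4}).ncard = b3') ∧
      (G.dist x z = 4 → ({w : V | G.Adj z w ∧ G.dist x w = 3}).ncard = c4' ∧
        ({w : V | G.Adj z w ∧ G.dist x w = 5}).ncard = 0)) :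
    (Y.ncard : ℚ) = 1 + (b0 : ℚ) * b1 / c2 + (b0 : ℚ) * b1 * b2 * b3 / ((c2 : ℚ) * c3 * c4) ∧
    ((Yᶜ).ncard : ℚ) = (b0 : ℚ) + (b0 : ℚ) * b1 * b2 / ((c2 : ℚ) * c3) ∧
    (∀ C : V, C ∉ Y → ({p : V | p ∈ Y ∧ G.Adj C p}).ncard = b0') ∧
    (∀ p ∈ Y, ({C : V | C ∉ Y ∧ G.Adj p C}).ncard = b0) ∧
    (∀ p ∈ Y, ∀ q ∈ Y, p ≠ q →
      ({C : V | G.Adj p C ∧ G.Adj q C}).ncard = c2 ∨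
      ({C : V | G.Adj p C ∧ G.Adj q C}).ncard = 0) ∧
    (∀ p ∈ Y, ∀ C : V, C ∉ Y → G.Adj p C →
      ({q : V | G.Adj q C ∧ q ≠ p ∧
        ({C' : V | G.Adj p C' ∧ G.Adj q C'}).ncard = c2}).ncard = b1) ∧
    (∀ p ∈ Y, ∀ C : V, C ∉ Y → ¬ G.Adj p C →
      ({q : V | G.Adj q C ∧
        ({C' : V | G.Adj p C' ∧ G.Adj q C'}).ncard = c2}).ncard = c3) ∧
    (∀ C C' : V, C ∉ Y → C' ∉ Y → C ≠ C' →
      ({p : V | G.Adj p C ∧ G.Adj p C'}).ncard = 0 ∨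
      ({p : V | G.Adj p C ∧ G.Adj p C'}).ncard = c2') ∧
    (∃ C C' : V, C ∉ Y ∧ C' ∉ Y ∧ C ≠ C' ∧
      ({p : V | G.Adj p C ∧ G.Adj p C'}).ncard = 0) ∧
    (∃ C C' : V, C ∉ Y ∧ C' ∉ Y ∧ C ≠ C' ∧
      ({p : V | G.Adj p C ∧ G.Adj p C'}).ncard = c2') := by
  classical
  have hdle : ∀ u v : V, G.dist u v ≤ 4 := fun u v => (hecc u).1 v
  have hpar := dist_parity_s17 hconn hbip
  have hadj1 : ∀ u v : V, G.Adj u v → G.dist u v = 1 := fun u v h =>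
    SimpleGraph.dist_eq_one_iff_adj.mpr h
  have hd1adj : ∀ u v : V, G.dist u v = 1 → G.Adj u v := fun u v h =>
    SimpleGraph.dist_eq_one_iff_adj.mp h
  have hdist0 : ∀ u v : V, G.dist u v = 0 ↔ u = v := fun u v => hconn.dist_eq_zero_iff
  have hstep : ∀ (x : V) (n : ℕ), (∃ z, G.dist x z = n + 1) → ∃ z, G.dist x z = n := by
    rintro x n ⟨z, hz⟩
    obtain ⟨u, _, hu⟩ := exists_pred hconn hz
    exact ⟨u, hu⟩
  have hex : ∀ (x : V) (k : ℕ), k ≤ 4 → ∃ z, G.dist x z = k := by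
    intro x k hk
    have h4 : ∃ z, G.dist x z = 4 := (hecc x).2
    have h3 := hstep x 3 h4
    have h2 := hstep x 2 h3
    have h1 := hstep x 1 h2
    have h0 := hstep x 0 h1
    interval_cases k <;> assumption
  obtain ⟨v0⟩ := hconn.nonempty
  obtain ⟨w0, hw0⟩ := (hecc v0).2
  obtain ⟨z0, hz0adj, hz0⟩ := exists_pred hconn (show G.dist v0 w0 = 3 + 1 from hw0)
  obtain ⟨x0, x1, hx0, hx1⟩ : ∃ x0 x1 : V, x0 ∈ Y ∧ x1 ∉ Y := by
    have := hbip w0 z0 hz0adj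
    by_cases h : w0 ∈ Y
    · exact ⟨w0, z0, h, this.mp h⟩
    · exact ⟨z0, w0, by tauto, h⟩
  have hposS : ∀ (S : Set V) (c : ℕ), S.Nonempty → S.ncard = c → c ≠ 0 := by
    intro S c hne hSc hc0
    rw [hc0, Set.ncard_eq_zero (Set.toFinite S)] at hSc
    exact hne.ne_empty hSc
  have hc2 : c2 ≠ 0 := by
    obtain ⟨z, hz⟩ := hex x0 2 (by norm_num)
    obtain ⟨u, hu1, hu2⟩ := exists_pred hconn (show G.dist x0 z = 1 + 1 from hz)
    exact hposS {w : V | G.Adj z w ∧ G.dist x0 w = 1} c2 ⟨u, hu1, hu2⟩ ((hregY x0 hx0 z).2.2.1 hz).1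
  have hc3 : c3 ≠ 0 := by
    obtain ⟨z, hz⟩ := hex x0 3 (by norm_num)
    obtain ⟨u, hu1, hu2⟩ := exists_pred hconn (show G.dist x0 z = 2 + 1 from hz)
    exact hposS {w : V | G.Adj z w ∧ G.dist x0 w = 2} c3 ⟨u, hu1, hu2⟩ ((hregY x0 hx0 z).2.2.2.1 hz).1
  have hc4 : c4 ≠ 0 := by
    obtain ⟨z, hz⟩ := hex x0 4 (by norm_num)
    obtain ⟨u, hu1, hu2⟩ := exists_pred hconn (show G.dist x0 z = 3 + 1 from hz)
    exact hposS {w : V | G.Adj z w ∧ G.dist x0 w = 3} c4 ⟨u, hu1, hu2⟩ ((hregY x0 hx0 z).2.2.2.2 hz).1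
  -- sphere double counting around x0
  have E0 : ({z : V | G.dist x0 z = 0}).ncard * b0 = ({z : V | G.dist x0 z = 1}).ncard * 1 :=
    ncard_mul_eq _ _ G.Adj (fun z w h => h.symm) b0 1
      (fun z hz => (hregY x0 hx0 z).1 hz)
      (fun w hw => ((hregY x0 hx0 w).2.1 hw).1)
  have E1 : ({z : V | G.dist x0 z = 1}).ncard * b1 = ({z : V | G.dist x0 z = 2}).ncard * c2 :=
    ncard_mul_eq _ _ G.Adj (fun z w h => h.symm) b1 c2
      (fun z hz => ((hregY x0 hx0 z).2.1 hz).2)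
      (fun w hw => ((hregY x0 hx0 w).2.2.1 hw).1)
  have E2 : ({z : V | G.dist x0 z = 2}).ncard * b2 = ({z : V | G.dist x0 z = 3}).ncard * c3 :=
    ncard_mul_eq _ _ G.Adj (fun z w h => h.symm) b2 c3
      (fun z hz => ((hregY x0 hx0 z).2.2.1 hz).2)
      (fun w hw => ((hregY x0 hx0 w).2.2.2.1 hw).1)
  have E3 : ({z : V | G.dist x0 z = 3}).ncard * b3 = ({z : V | G.dist x0 z = 4}).ncard * c4 :=
    ncard_mul_eq _ _ G.Adj (fun z w h => h.symm) b3 c4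
      (fun z hz => ((hregY x0 hx0 z).2.2.2.1 hz).2)
      (fun w hw => ((hregY x0 hx0 w).2.2.2.2 hw).1)
  have hn0 : ({z : V | G.dist x0 z = 0}).ncard = 1 := by
    rw [show {z : V | G.dist x0 z = 0} = {x0} from by
      ext z; simp [hdist0, eq_comm, Set.mem_singleton_iff]]
    exact Set.ncard_singleton x0
  have hn1 : ({z : V | G.dist x0 z = 1}).ncard = b0 := by
    rw [hn0, one_mul, mul_one] at E0; omega
  have hn2 : ({z : V | G.dist x0 z = 2}).ncard * c2 = b0 * b1 := by
    rw [← E1, hn1]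
  have hn3 : ({z : V | G.dist x0 z = 3}).ncard * (c2 * c3) = b0 * b1 * b2 := by
    calc ({z : V | G.dist x0 z = 3}).ncard * (c2 * c3)
        = ({z : V | G.dist x0 z = 3}).ncard * c3 * c2 := by ring
      _ = ({z : V | G.dist x0 z = 2}).ncard * b2 * c2 := by rw [← E2]
      _ = ({z : V | G.dist x0 z = 2}).ncard * c2 * b2 := by ring
      _ = b0 * b1 * b2 := by rw [hn2]
  have hn4 : ({z : V | G.dist x0 z = 4}).ncard * (c2 * c3 * c4) = b0 * b1 * b2 * b3 := by
    calc ({z : V | G.dist x0 z = 4}).ncard * (c2 * c3 * c4)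
        = ({z : V | G.dist x0 z = 4}).ncard * c4 * (c2 * c3) := by ring
      _ = ({z : V | G.dist x0 z = 3}).ncard * b3 * (c2 * c3) := by rw [← E3]
      _ = ({z : V | G.dist x0 z = 3}).ncard * (c2 * c3) * b3 := by ring
      _ = b0 * b1 * b2 * b3 := by rw [hn3]
  have hcq2 : ((c2 : ℚ)) ≠ 0 := Nat.cast_ne_zero.mpr hc2
  have hcq3 : ((c3 : ℚ)) ≠ 0 := Nat.cast_ne_zero.mpr hc3
  have hcq4 : ((c4 : ℚ)) ≠ 0 := Nat.cast_ne_zero.mpr hc4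
  -- common-neighbour counts
  have hcn2 : ∀ p, p ∈ Y → ∀ q : V, G.dist p q = 2 →
      ({C : V | G.Adj p C ∧ G.Adj q C}).ncard = c2 := by
    intro p hp q hpq
    have heq : {C : V | G.Adj p C ∧ G.Adj q C} = {w : V | G.Adj q w ∧ G.dist p w = 1} := by
      ext C; simp only [Set.mem_setOf_eq]
      constructor
      · rintro ⟨h1, h2⟩; exact ⟨h2, hadj1 _ _ h1⟩
      · rintro ⟨h1, h2⟩; exact ⟨hd1adj _ _ h2, h1⟩
    rw [heq]; exact ((hregY p hp q).2.2.1 hpq).1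
  have hcn4 : ∀ p q : V, G.dist p q = 4 → {C : V | G.Adj p C ∧ G.Adj q C} = ∅ := by
    intro p q h
    rw [Set.eq_empty_iff_forall_notMem]
    rintro C ⟨h1, h2⟩
    have ht : G.dist p q ≤ G.dist p C + G.dist C q := hconn.dist_triangle
    rw [hadj1 _ _ h1, hadj1 _ _ h2.symm] at ht
    omega
  have hbcn2 : ∀ C C' : V, C ∉ Y → G.dist C C' = 2 →
      ({p : V | G.Adj p C ∧ G.Adj p C'}).ncard = c2' := by
    intro C C' hC h
    have heq : {p : V | G.Adj p C ∧ G.Adj p C'} = {w : V | G.Adj C' w ∧ G.dist C w = 1} := by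
      ext p; simp only [Set.mem_setOf_eq]
      constructor
      · rintro ⟨h1, h2⟩; exact ⟨h2.symm, hadj1 _ _ h1.symm⟩
      · rintro ⟨h1, h2⟩; exact ⟨(hd1adj _ _ h2).symm, h1.symm⟩
    rw [heq]; exact ((hregY' C hC C').2.2.1 h).1
  have hbcn4 : ∀ C C' : V, G.dist C C' = 4 → {p : V | G.Adj p C ∧ G.Adj p C'} = ∅ := by
    intro C C' h
    rw [Set.eq_empty_iff_forall_notMem]
    rintro p ⟨h1, h2⟩
    have ht : G.dist C C' ≤ G.dist C p + G.dist p C' := hconn.dist_triangle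
    rw [hadj1 _ _ h1.symm, hadj1 _ _ h2] at ht
    omega
  refine ⟨?_, ?_, ?_, ?_, ?_, ?_, ?_, ?_, ?_, ?_⟩
  -- 1 : number of points
  · have hY : Y = {z : V | G.dist x0 z = 0} ∪ {z : V | G.dist x0 z = 2}
        ∪ {z : V | G.dist x0 z = 4} := by
      ext z
      simp only [Set.mem_union, Set.mem_setOf_eq]
      constructor
      · intro hz
        have he : Even (G.dist x0 z) := (hpar x0 z).mpr (iff_of_true hx0 hz)
        have hle := hdle x0 z
        rw [Nat.even_iff] at he
        omega
      · intro hz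
        have he : Even (G.dist x0 z) := by rcases hz with (h | h) | h <;> rw [h] <;> decide
        exact ((hpar x0 z).mp he).mp hx0
    have hd02 : Disjoint {z : V | G.dist x0 z = 0} {z : V | G.dist x0 z = 2} := by
      rw [Set.disjoint_left]; rintro z h1 h2
      simp only [Set.mem_setOf_eq] at h1 h2; omega
    have hd04 : Disjoint {z : V | G.dist x0 z = 0} {z : V | G.dist x0 z = 4} := by
      rw [Set.disjoint_left]; rintro z h1 h2
      simp only [Set.mem_setOf_eq] at h1 h2; omega
    have hd24 : Disjoint {z : V | G.dist x0 z = 2} {z : V | G.dist x0 z = 4} := by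
      rw [Set.disjoint_left]; rintro z h1 h2
      simp only [Set.mem_setOf_eq] at h1 h2; omega
    have hYcard : Y.ncard = 1 + ({z : V | G.dist x0 z = 2}).ncard
        + ({z : V | G.dist x0 z = 4}).ncard := by
      rw [hY, Set.ncard_union_eq (Set.disjoint_union_left.mpr ⟨hd04, hd24⟩)
          (Set.toFinite _) (Set.toFinite _),
        Set.ncard_union_eq hd02 (Set.toFinite _) (Set.toFinite _), hn0]
    have hq2 : (({z : V | G.dist x0 z = 2}).ncard : ℚ) = (b0 : ℚ) * b1 / c2 := by
      rw [eq_div_iff hcq2]; exact_mod_cast hn2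
    have hq4 : (({z : V | G.dist x0 z = 4}).ncard : ℚ)
        = (b0 : ℚ) * b1 * b2 * b3 / ((c2 : ℚ) * c3 * c4) := by
      rw [eq_div_iff (by exact mul_ne_zero (mul_ne_zero hcq2 hcq3) hcq4)]
      exact_mod_cast hn4
    rw [hYcard]
    push_cast
    rw [hq2, hq4]
  -- 2 : number of blocks
  · have hYc : Yᶜ = {z : V | G.dist x0 z = 1} ∪ {z : V | G.dist x0 z = 3} := by
      ext z
      simp only [Set.mem_union, Set.mem_setOf_eq, Set.mem_compl_iff]
      constructor
      · intro hz
        have hne : ¬ Even (G.dist x0 z) := fun he => hz (((hpar x0 z).mp he).mp hx0)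
        rw [Nat.even_iff] at hne
        have hle := hdle x0 z
        omega
      · intro hz hzY
        have he : Even (G.dist x0 z) := (hpar x0 z).mpr (iff_of_true hx0 hzY)
        rcases hz with h | h <;> rw [h, Nat.even_iff] at he <;> omega
    have hd13 : Disjoint {z : V | G.dist x0 z = 1} {z : V | G.dist x0 z = 3} := by
      rw [Set.disjoint_left]; rintro z h1 h2
      simp only [Set.mem_setOf_eq] at h1 h2; omega
    have hYcard : (Yᶜ).ncard = b0 + ({z : V | G.dist x0 z = 3}).ncard := by
      rw [hYc, Set.ncard_union_eq hd13 (Set.toFinite _) (Set.toFinite _), hn1]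
    have hq3 : (({z : V | G.dist x0 z = 3}).ncard : ℚ)
        = (b0 : ℚ) * b1 * b2 / ((c2 : ℚ) * c3) := by
      rw [eq_div_iff (mul_ne_zero hcq2 hcq3)]
      exact_mod_cast hn3
    rw [hYcard]
    push_cast
    rw [hq3]
  -- 3 : block size
  · intro C hC
    have heq : {p : V | p ∈ Y ∧ G.Adj C p} = {w : V | G.Adj C w ∧ G.dist C w = 1} := by
      ext p; simp only [Set.mem_setOf_eq]
      constructor
      · rintro ⟨h1, h2⟩; exact ⟨h2, hadj1 _ _ h2⟩
      · rintro ⟨h1, h2⟩; exact ⟨not_not.mp (fun hp => hp ((hbip p C h1.symm).mpr hC))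
          |> fun h => h, h1⟩
    rw [heq]
    exact (hregY' C hC C).1 SimpleGraph.dist_self
  -- 4 : replication number
  · intro p hp
    have heq : {C : V | C ∉ Y ∧ G.Adj p C} = {w : V | G.Adj p w ∧ G.dist p w = 1} := by
      ext C; simp only [Set.mem_setOf_eq]
      constructor
      · rintro ⟨h1, h2⟩; exact ⟨h2, hadj1 _ _ h2⟩
      · rintro ⟨h1, h2⟩; exact ⟨(hbip p C h1).mp hp, h1⟩
    rw [heq]
    exact (hregY p hp p).1 SimpleGraph.dist_self
  -- 5 : two points lie in c2 or 0 common blocks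
  · intro p hp q hq hne
    have h24 : G.dist p q = 2 ∨ G.dist p q = 4 := by
      have hle := hdle p q
      have hev : Even (G.dist p q) := (hpar p q).mpr (iff_of_true hp hq)
      rw [Nat.even_iff] at hev
      have h0 : G.dist p q ≠ 0 := fun h => hne ((hdist0 p q).mp h)
      omega
    rcases h24 with h | h
    · exact Or.inl (hcn2 p hp q h)
    · exact Or.inr (by rw [hcn4 p q h]; exact Set.ncard_empty _)
  -- 6 : flag condition (b1)
  · intro p hp C hC hadjpC
    have hd1 : G.dist p C = 1 := hadj1 _ _ hadjpC
    have heq : {q : V | G.Adj q C ∧ q ≠ p ∧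
        ({C' : V | G.Adj p C' ∧ G.Adj q C'}).ncard = c2}
        = {w : V | G.Adj C w ∧ G.dist p w = 2} := by
      ext q; simp only [Set.mem_setOf_eq]
      constructor
      · rintro ⟨h1, h2, _⟩
        refine ⟨h1.symm, ?_⟩
        have hqY : q ∈ Y := (hbip q C h1).mpr hC
        have hev : Even (G.dist p q) := (hpar p q).mpr (iff_of_true hp hqY)
        rw [Nat.even_iff] at hev
        have ht : G.dist p q ≤ G.dist p C + G.dist C q := hconn.dist_triangle
        rw [hd1, hadj1 _ _ h1.symm] at ht
        have h0 : G.dist p q ≠ 0 := fun h => h2 ((hdist0 p q).mp h).symm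
        omega
      · rintro ⟨h1, h2⟩
        have hq0 : q ≠ p := by
          intro h; rw [h, SimpleGraph.dist_self] at h2; omega
        exact ⟨h1.symm, hq0, hcn2 p hp q h2⟩
    rw [heq]
    exact ((hregY p hp C).2.1 hd1).2
  -- 7 : non-flag condition (c3)
  · intro p hp C hC hnadj
    have hd3 : G.dist p C = 3 := by
      have hnev : ¬ Even (G.dist p C) := fun he => hC (((hpar p C).mp he).mp hp)
      rw [Nat.even_iff] at hnev
      have hle := hdle p C
      have h1 : G.dist p C ≠ 1 := fun h => hnadj (hd1adj _ _ h)
      omega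
    have heq : {q : V | G.Adj q C ∧
        ({C' : V | G.Adj p C' ∧ G.Adj q C'}).ncard = c2}
        = {w : V | G.Adj C w ∧ G.dist p w = 2} := by
      ext q; simp only [Set.mem_setOf_eq]
      constructor
      · rintro ⟨h1, h2⟩
        refine ⟨h1.symm, ?_⟩
        have hqY : q ∈ Y := (hbip q C h1).mpr hC
        have hev : Even (G.dist p q) := (hpar p q).mpr (iff_of_true hp hqY)
        rw [Nat.even_iff] at hev
        have hle := hdle p q
        have ht : G.dist p C ≤ G.dist p q + G.dist q C := hconn.dist_triangle
        rw [hd3, hadj1 _ _ h1] at ht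
        have h4 : G.dist p q ≠ 4 := by
          intro h4
          rw [hcn4 p q h4, Set.ncard_empty] at h2
          exact hc2 h2.symm
        omega
      · rintro ⟨h1, h2⟩
        exact ⟨h1.symm, hcn2 p hp q h2⟩
    rw [heq]
    exact ((hregY p hp C).2.2.2.1 hd3).1
  -- 8 : block intersection dichotomy
  · intro C C' hC hC' hne
    have h24 : G.dist C C' = 2 ∨ G.dist C C' = 4 := by
      have hle := hdle C C'
      have hev : Even (G.dist C C') := (hpar C C').mpr (iff_of_false hC hC')
      rw [Nat.even_iff] at hev
      have h0 : G.dist C C' ≠ 0 := fun h => hne ((hdist0 C C').mp h)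
      omega
    rcases h24 with h | h
    · exact Or.inr (hbcn2 C C' hC h)
    · exact Or.inl (by rw [hbcn4 C C' h]; exact Set.ncard_empty _)
  -- 9 : disjoint pair of blocks exists
  · obtain ⟨w4, hw4⟩ := (hecc x1).2
    have hw4Y : w4 ∉ Y := fun h =>
      hx1 (((hpar x1 w4).mp (by rw [hw4]; decide)).mpr h)
    have hne : x1 ≠ w4 := by
      intro h; rw [← h, SimpleGraph.dist_self] at hw4; omega
    exact ⟨x1, w4, hx1, hw4Y, hne, by rw [hbcn4 x1 w4 hw4]; exact Set.ncard_empty _⟩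
  -- 10 : meeting pair of blocks exists
  · obtain ⟨z2, hz2⟩ := hex x1 2 (by norm_num)
    have hz2Y : z2 ∉ Y := fun h =>
      hx1 (((hpar x1 z2).mp (by rw [hz2]; decide)).mpr h)
    have hne : x1 ≠ z2 := by
      intro h; rw [← h, SimpleGraph.dist_self] at hz2; omega
    exact ⟨x1, z2, hx1, hz2Y, hne, hbcn2 x1 z2 hx1 hz2⟩
end

section
/- Let Γ be the incidence graph of a quasi-symmetric SPBIBD D with parameters (v,b,r,k,λ₁,0) of type (k−1,t), intersection numbers x=0 and y=1, where every block has size k=2. Then t=1, λ₁=1, y=1, and Γ is isomorphic to the subdivision graph of the complete bipartite graph K_{r,r} with r ≥ 2 (the graph obtained from K_{r,r} by replacing each edge with a path of length 2), where the r+r original vertices correspond to the points of D and the r² subdivision vertices correspond to the blocks. -/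
open Finset

/-- The subdivision graph of the complete bipartite graph `K_{n,n}`: the original
vertices are `Sum.inl` (the two sides of `K_{n,n}`) and the subdivision vertices
`Sum.inr (i, j)` correspond to the edges of `K_{n,n}`. -/
def subKnn (n : ℕ) : SimpleGraph ((Fin n ⊕ Fin n) ⊕ Fin n × Fin n) :=
  SimpleGraph.fromRel (fun u w => ∃ i j : Fin n,
    (u = Sum.inl (Sum.inl i) ∨ u = Sum.inl (Sum.inr j)) ∧ w = Sum.inr (i, j))

/-- if every block of a quasi-symmetric SPBIBD with x = 0, y = 1
has size k = 2, then t = 1, λ₁ = 1 and the incidence graph is isomorphic to the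
subdivision graph of `K_{r,r}` with r ≥ 2, the points corresponding to the
original vertices and the blocks to the subdivision vertices. -/
theorem stmt18
    {P Bl : Type} [Fintype P] [Fintype Bl] [DecidableEq P] [DecidableEq Bl]
    (pts : Bl → Finset P) (v b r k t lam y : ℕ)
    (hv : Fintype.card P = v) (hb : Fintype.card Bl = b)
    (hk : ∀ C : Bl, (pts C).card = k)
    (hr : ∀ p : P, (blocksThru pts p).card = r)
    (hlam : ∀ p q : P, p ≠ q → lamCount pts p q = lam ∨ lamCount pts p q = 0)
    (hflag : ∀ (p : P) (C : Bl), p ∈ pts C →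
      ((pts C).filter (fun q => q ≠ p ∧ lamCount pts p q = lam)).card = k - 1)
    (hnonflag : ∀ (p : P) (C : Bl), p ∉ pts C →
      ((pts C).filter (fun q => lamCount pts p q = lam)).card = t)
    (hqs : ∀ C C' : Bl, C ≠ C' →
      (pts C ∩ pts C').card = 0 ∨ (pts C ∩ pts C').card = y)
    (hx0 : ∃ C C' : Bl, C ≠ C' ∧ (pts C ∩ pts C').card = 0)
    (hy0 : ∃ C C' : Bl, C ≠ C' ∧ (pts C ∩ pts C').card = y)
    (hkv : k < v) (hrb : r < b) (ht : 1 ≤ t) (htk : t < k) (hlam1 : 1 ≤ lam)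
    (hy : y = 1) (hk2 : k = 2)
    : t = 1 ∧ lam = 1 ∧ y = 1 ∧ 2 ≤ r ∧
      ∃ φ : incGraph pts ≃g subKnn r,
        ∀ p : P, ∃ u : Fin r ⊕ Fin r, φ (Sum.inl p) = Sum.inl u := by
  classical
  subst hy hk2 hv hb
  -- distinct blocks sharing two points are equal
  have fact0 : ∀ (C C' : Bl) (p q : P), p ≠ q → p ∈ pts C → q ∈ pts C →
      p ∈ pts C' → q ∈ pts C' → C = C' := by
    intro C C' p q hpq h1 h2 h3 h4
    by_contra hne
    have hqs' := hqs C C' hne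
    have hsub : ({p, q} : Finset P) ⊆ pts C ∩ pts C' := by
      intro z hz
      simp only [Finset.mem_insert, Finset.mem_singleton] at hz
      rcases hz with rfl | rfl <;> simp [Finset.mem_inter, h1, h2, h3, h4]
    have hle := Finset.card_le_card hsub
    rw [Finset.card_pair hpq] at hle
    omega
  have hle1 : ∀ p q : P, p ≠ q → lamCount pts p q ≤ 1 := by
    intro p q hpq
    by_contra h
    push_neg at h
    obtain ⟨C, hC, C', hC', hne⟩ := Finset.one_lt_card.mp h
    simp only [Finset.mem_inter, blocksThru, Finset.mem_filter, Finset.mem_univ,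
      true_and] at hC hC'
    exact hne (fact0 C C' p q hpq hC.1 hC.2 hC'.1 hC'.2)
  have hAdj1 : ∀ (z w : P) (C : Bl), w ≠ z → z ∈ pts C → w ∈ pts C →
      lamCount pts z w = 1 := by
    intro z w C hne h1 h2
    have hCmem : C ∈ blocksThru pts z ∩ blocksThru pts w := by
      simp [blocksThru, Finset.mem_inter, h1, h2]
    have hpos := Finset.card_pos.mpr ⟨C, hCmem⟩
    have hle := hle1 z w (Ne.symm hne)
    unfold lamCount
    unfold lamCount at hle
    omega
  have hAdjEx : ∀ z w : P, lamCount pts z w = 1 → ∃ C, z ∈ pts C ∧ w ∈ pts C := by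
    intro z w h
    unfold lamCount at h
    have hpos : 0 < ((blocksThru pts z) ∩ (blocksThru pts w)).card := by omega
    obtain ⟨C, hC⟩ := Finset.card_pos.mp hpos
    simp only [Finset.mem_inter, blocksThru, Finset.mem_filter, Finset.mem_univ,
      true_and] at hC
    exact ⟨C, hC.1, hC.2⟩
  have hsymm : ∀ p q : P, lamCount pts p q = lamCount pts q p := by
    intro p q; unfold lamCount; rw [Finset.inter_comm]
  -- a disjoint pair of blocks
  obtain ⟨C₀, C₁, hC01, hdisj01⟩ := hx0
  obtain ⟨aa, bb, hab, hCab⟩ := Finset.card_eq_two.mp (hk C₀)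
  have haC : aa ∈ pts C₀ := by rw [hCab]; simp
  have hbC : bb ∈ pts C₀ := by rw [hCab]; simp
  -- lam = 1
  have hlam' : lam = 1 := by
    have hflag0 := hflag aa C₀ haC
    have : 0 < ((pts C₀).filter (fun q => q ≠ aa ∧ lamCount pts aa q = lam)).card := by
      omega
    obtain ⟨q, hq⟩ := Finset.card_pos.mp this
    simp only [Finset.mem_filter] at hq
    obtain ⟨hqC, hqa, hql⟩ := hq
    rw [← hql]
    exact hAdj1 aa q C₀ hqa haC hqC
  subst hlam'
  have ht1 : t = 1 := by omega
  subst ht1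
  -- degree lemma
  have hoth0 : ∀ (C : Bl) (z : P), z ∈ pts C → ∃ w, w ≠ z ∧ pts C = {z, w} := by
    intro C z hz
    obtain ⟨x, y, hxy, hxyC⟩ := Finset.card_eq_two.mp (hk C)
    rw [hxyC] at hz
    simp only [Finset.mem_insert, Finset.mem_singleton] at hz
    rcases hz with rfl | rfl
    · exact ⟨y, hxy.symm, hxyC⟩
    · exact ⟨x, hxy, by rw [hxyC, Finset.pair_comm]⟩
  have hN : ∀ z : P,
      (Finset.univ.filter (fun q => q ≠ z ∧ lamCount pts z q = 1)).card = r := by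
    intro z
    rw [← hr z]
    have himg : Finset.univ.filter (fun q => q ≠ z ∧ lamCount pts z q = 1) =
        (blocksThru pts z).image
          (fun C => if h : z ∈ pts C then (hoth0 C z h).choose else z) := by
      ext w
      simp only [Finset.mem_filter, Finset.mem_univ, true_and, Finset.mem_image]
      constructor
      · rintro ⟨hwz, hl⟩
        obtain ⟨C, hzC, hwC⟩ := hAdjEx z w hl
        refine ⟨C, by simp [blocksThru, hzC], ?_⟩
        rw [dif_pos hzC]
        obtain ⟨hne, heq⟩ := (hoth0 C z hzC).choose_spec
        rw [heq] at hwC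
        simp only [Finset.mem_insert, Finset.mem_singleton] at hwC
        rcases hwC with rfl | rfl
        · exact absurd rfl hwz
        · rfl
      · rintro ⟨C, hC, rfl⟩
        simp only [blocksThru, Finset.mem_filter, Finset.mem_univ, true_and] at hC
        rw [dif_pos hC]
        obtain ⟨hne, heq⟩ := (hoth0 C z hC).choose_spec
        refine ⟨hne, hAdj1 z _ C hne hC ?_⟩
        have hx : (hoth0 C z hC).choose ∈ ({z, (hoth0 C z hC).choose} : Finset P) := by
          simp
        rwa [← heq] at hx
    rw [himg]
    apply Finset.card_image_of_injOn
    intro C hC C' hC' heq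
    simp only [blocksThru, Finset.mem_coe, Finset.mem_filter, Finset.mem_univ,
      true_and] at hC hC'
    simp only [dif_pos hC, dif_pos hC'] at heq
    obtain ⟨hne, hCeq⟩ := (hoth0 C z hC).choose_spec
    obtain ⟨hne', hCeq'⟩ := (hoth0 C' z hC').choose_spec
    refine fact0 C C' z (hoth0 C z hC).choose (Ne.symm hne) hC ?_ hC' ?_
    · have hx : (hoth0 C z hC).choose ∈ ({z, (hoth0 C z hC).choose} : Finset P) := by
        simp
      rwa [← hCeq] at hx
    · have hx : (hoth0 C' z hC').choose ∈
          ({z, (hoth0 C' z hC').choose} : Finset P) := by simp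
      rw [heq]
      rwa [← hCeq'] at hx
  -- the two sides
  set A := Finset.univ.filter (fun q => q ≠ aa ∧ lamCount pts aa q = 1) with hA
  set B := Finset.univ.filter (fun q => q ≠ bb ∧ lamCount pts bb q = 1) with hB
  have hmemA : ∀ p, p ∈ A ↔ p ≠ aa ∧ lamCount pts aa p = 1 := by
    intro p; simp [hA]
  have hmemB : ∀ p, p ∈ B ↔ p ≠ bb ∧ lamCount pts bb p = 1 := by
    intro p; simp [hB]
  have hcardA : A.card = r := hN aa
  have hcardB : B.card = r := hN bb
  have hdisjAB : ∀ p, p ∈ A → p ∈ B → False := by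
    intro p hpA hpB
    obtain ⟨hpa, hla⟩ := (hmemA p).mp hpA
    obtain ⟨hpb, hlb⟩ := (hmemB p).mp hpB
    have hpC : p ∉ pts C₀ := by rw [hCab]; simp [hpa, hpb]
    have h1 := hnonflag p C₀ hpC
    have hsub : ({aa, bb} : Finset P) ⊆
        (pts C₀).filter (fun q => lamCount pts p q = 1) := by
      intro z hz
      simp only [Finset.mem_insert, Finset.mem_singleton] at hz
      rcases hz with rfl | rfl
      · exact Finset.mem_filter.mpr ⟨haC, by rw [hsymm]; exact hla⟩
      · exact Finset.mem_filter.mpr ⟨hbC, by rw [hsymm]; exact hlb⟩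
    have hle := Finset.card_le_card hsub
    rw [Finset.card_pair hab, h1] at hle
    omega
  have huniv : ∀ p : P, p ∈ A ∨ p ∈ B := by
    intro p
    by_cases hpa : p = aa
    · subst hpa
      exact Or.inr ((hmemB p).mpr ⟨hab, hAdj1 bb p C₀ hab hbC haC⟩)
    by_cases hpb : p = bb
    · subst hpb
      exact Or.inl ((hmemA p).mpr ⟨Ne.symm hab, hAdj1 aa p C₀ (Ne.symm hab) haC hbC⟩)
    have hpC : p ∉ pts C₀ := by rw [hCab]; simp [hpa, hpb]
    have h1 := hnonflag p C₀ hpC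
    have : 0 < ((pts C₀).filter (fun q => lamCount pts p q = 1)).card := by omega
    obtain ⟨q, hq⟩ := Finset.card_pos.mp this
    obtain ⟨hqC, hql⟩ := Finset.mem_filter.mp hq
    rw [hCab] at hqC
    simp only [Finset.mem_insert, Finset.mem_singleton] at hqC
    rcases hqC with rfl | rfl
    · exact Or.inl ((hmemA p).mpr ⟨hpa, by rw [hsymm]; exact hql⟩)
    · exact Or.inr ((hmemB p).mpr ⟨hpb, by rw [hsymm]; exact hql⟩)
  -- independence of each side
  have hind : ∀ (x p q : P) (C : Bl), p ≠ x → q ≠ x → lamCount pts x p = 1 →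
      lamCount pts x q = 1 → p ≠ q → p ∈ pts C → q ∈ pts C → False := by
    intro x p q C hpx hqx hlp hlq hpq hpC hqC
    have hxC : x ∉ pts C := by
      intro hxC
      have hsub : ({x, p, q} : Finset P) ⊆ pts C := by
        intro z hz
        simp only [Finset.mem_insert, Finset.mem_singleton] at hz
        rcases hz with rfl | rfl | rfl <;> assumption
      have hle := Finset.card_le_card hsub
      rw [hk C] at hle
      have h3 : ({x, p, q} : Finset P).card = 3 := by
        rw [Finset.card_insert_of_notMem (by simp [Ne.symm hpx, Ne.symm hqx]),
          Finset.card_pair hpq]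
      omega
    have h1 := hnonflag x C hxC
    have hsub : ({p, q} : Finset P) ⊆
        (pts C).filter (fun z => lamCount pts x z = 1) := by
      intro z hz
      simp only [Finset.mem_insert, Finset.mem_singleton] at hz
      rcases hz with rfl | rfl
      · exact Finset.mem_filter.mpr ⟨hpC, hlp⟩
      · exact Finset.mem_filter.mpr ⟨hqC, hlq⟩
    have hle := Finset.card_le_card hsub
    rw [Finset.card_pair hpq, h1] at hle
    omega
  have hindA : ∀ (p q : P) (C : Bl), p ∈ A → q ∈ A → p ≠ q →
      p ∈ pts C → q ∈ pts C → False := by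
    intro p q C hpA hqA hpq hpC hqC
    obtain ⟨h1, h2⟩ := (hmemA p).mp hpA
    obtain ⟨h3, h4⟩ := (hmemA q).mp hqA
    exact hind aa p q C h1 h3 h2 h4 hpq hpC hqC
  have hindB : ∀ (p q : P) (C : Bl), p ∈ B → q ∈ B → p ≠ q →
      p ∈ pts C → q ∈ pts C → False := by
    intro p q C hpB hqB hpq hpC hqC
    obtain ⟨h1, h2⟩ := (hmemB p).mp hpB
    obtain ⟨h3, h4⟩ := (hmemB q).mp hqB
    exact hind bb p q C h1 h3 h2 h4 hpq hpC hqC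
  -- completeness
  have hcomplete : ∀ p ∈ A, ∀ q ∈ B, ∃ C, p ∈ pts C ∧ q ∈ pts C := by
    intro p hpA q hqB
    have hNsub : Finset.univ.filter (fun w => w ≠ p ∧ lamCount pts p w = 1) ⊆ B := by
      intro w hw
      simp only [Finset.mem_filter, Finset.mem_univ, true_and] at hw
      obtain ⟨hwp, hwl⟩ := hw
      rcases huniv w with hwA | hwB
      · obtain ⟨C, hpC, hwC⟩ := hAdjEx p w hwl
        exact absurd (hindA p w C hpA hwA (Ne.symm hwp) hpC hwC) (fun h => h)
      · exact hwB
    have heqNB : Finset.univ.filter (fun w => w ≠ p ∧ lamCount pts p w = 1) = B :=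
      Finset.eq_of_subset_of_card_le hNsub (by rw [hN p, hcardB])
    rw [← heqNB] at hqB
    simp only [Finset.mem_filter, Finset.mem_univ, true_and] at hqB
    exact hAdjEx p q hqB.2
  -- block endpoints
  have hblk : ∀ C : Bl, ∃ p q, p ∈ A ∧ q ∈ B ∧ pts C = {p, q} := by
    intro C
    obtain ⟨x, y, hxy, hC⟩ := Finset.card_eq_two.mp (hk C)
    have hxC : x ∈ pts C := by rw [hC]; simp
    have hyC : y ∈ pts C := by rw [hC]; simp
    rcases huniv x with hxA | hxB <;> rcases huniv y with hyA | hyB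
    · exact absurd (hindA x y C hxA hyA hxy hxC hyC) (fun h => h)
    · exact ⟨x, y, hxA, hyB, hC⟩
    · exact ⟨y, x, hyA, hxB, by rw [hC, Finset.pair_comm]⟩
    · exact absurd (hindB x y C hxB hyB hxy hxC hyC) (fun h => h)
  choose pA pB hpA hpB hpts using hblk
  have hpAmem : ∀ C, pA C ∈ pts C := by intro C; rw [hpts C]; simp
  have hpBmem : ∀ C, pB C ∈ pts C := by intro C; rw [hpts C]; simp
  have hpAB : ∀ C, pA C ≠ pB C := by
    intro C h
    exact hdisjAB (pA C) (hpA C) (h ▸ hpB C)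
  -- r ≥ 2
  have hABunion : A ∪ B = Finset.univ := by
    apply Finset.eq_univ_iff_forall.mpr
    intro p
    rcases huniv p with h | h
    · exact Finset.mem_union_left _ h
    · exact Finset.mem_union_right _ h
  have hABdisj : Disjoint A B := by
    rw [Finset.disjoint_left]
    intro p hpA hpB
    exact hdisjAB p hpA hpB
  have hcardP : Fintype.card P = 2 * r := by
    rw [← Finset.card_univ, ← hABunion, Finset.card_union_of_disjoint hABdisj,
      hcardA, hcardB]
    ring
  have hr2 : 2 ≤ r := by omega
  refine ⟨rfl, rfl, rfl, hr2, ?_⟩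
  -- equivalences
  have eA : {x // x ∈ A} ≃ Fin r := A.equivFinOfCardEq hcardA
  have eB : {x // x ∈ B} ≃ Fin r := B.equivFinOfCardEq hcardB
  set f : P → Fin r ⊕ Fin r := fun p =>
    if h : p ∈ A then Sum.inl (eA ⟨p, h⟩)
    else Sum.inr (eB ⟨p, (huniv p).resolve_left h⟩) with hf
  have hfbij : Function.Bijective f := by
    constructor
    · intro p q hpq
      by_cases hp : p ∈ A <;> by_cases hq : q ∈ A <;>
        simp only [hf, dif_pos, dif_neg, hp, hq] at hpq
      · exact congrArg Subtype.val (eA.injective (Sum.inl.inj hpq))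
      · exact absurd hpq (by simp)
      · exact absurd hpq (by simp)
      · exact congrArg Subtype.val (eB.injective (Sum.inr.inj hpq))
    · intro u
      rcases u with i | j
      · refine ⟨(eA.symm i).1, ?_⟩
        rw [hf]
        simp only [dif_pos (eA.symm i).2]
        congr 1
        rw [show (⟨(eA.symm i).1, (eA.symm i).2⟩ : {x // x ∈ A}) = eA.symm i from rfl]
        exact eA.apply_symm_apply i
      · refine ⟨(eB.symm j).1, ?_⟩
        have hnA : (eB.symm j).1 ∉ A := fun h => hdisjAB _ h (eB.symm j).2
        rw [hf]
        simp only [dif_neg hnA]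
        congr 1
        rw [show (⟨(eB.symm j).1, _⟩ : {x // x ∈ B}) = eB.symm j from rfl]
        exact eB.apply_symm_apply j
  set ePt : P ≃ (Fin r ⊕ Fin r) := Equiv.ofBijective f hfbij with hePt
  set g : Bl → {x // x ∈ A} × {x // x ∈ B} :=
    fun C => (⟨pA C, hpA C⟩, ⟨pB C, hpB C⟩) with hg
  have hgbij : Function.Bijective g := by
    constructor
    · intro C C' hCC
      rw [hg] at hCC
      simp only [Prod.mk.injEq, Subtype.mk.injEq] at hCC
      exact fact0 C C' (pA C) (pB C) (hpAB C) (hpAmem C) (hpBmem C)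
        (hCC.1 ▸ hpAmem C') (hCC.2 ▸ hpBmem C')
    · rintro ⟨⟨p, hp⟩, ⟨q, hq⟩⟩
      obtain ⟨C, hpC, hqC⟩ := hcomplete p hp q hq
      have hpq : p ≠ q := fun h => hdisjAB p hp (h ▸ hq)
      refine ⟨C, ?_⟩
      have hCpq : pts C = {p, q} := by
        apply (Finset.eq_of_subset_of_card_le _ _).symm
        · intro z hz
          simp only [Finset.mem_insert, Finset.mem_singleton] at hz
          rcases hz with rfl | rfl <;> assumption
        · rw [hk C, Finset.card_pair hpq]
      have h1 : pA C = p := by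
        have := hpAmem C
        rw [hCpq] at this
        simp only [Finset.mem_insert, Finset.mem_singleton] at this
        rcases this with h | h
        · exact h
        · exact absurd (hdisjAB (pA C) (hpA C) (h ▸ hq)) (fun x => x)
      have h2 : pB C = q := by
        have := hpBmem C
        rw [hCpq] at this
        simp only [Finset.mem_insert, Finset.mem_singleton] at this
        rcases this with h | h
        · exact absurd (hdisjAB (pB C) (h ▸ hp) (hpB C)) (fun x => x)
        · exact h
      rw [hg]
      simp only [Prod.mk.injEq, Subtype.mk.injEq]
      exact ⟨h1, h2⟩
  set eBl : Bl ≃ (Fin r × Fin r) :=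
    (Equiv.ofBijective g hgbij).trans (eA.prodCongr eB) with heBl
  have heBlC : ∀ C, eBl C = (eA ⟨pA C, hpA C⟩, eB ⟨pB C, hpB C⟩) := fun C => rfl
  -- key incidence lemma
  have hkey : ∀ (p : P) (C : Bl), p ∈ pts C ↔
      ∃ i j : Fin r, (ePt p = Sum.inl i ∨ ePt p = Sum.inr j) ∧ eBl C = (i, j) := by
    intro p C
    constructor
    · intro hpC
      rw [hpts C] at hpC
      simp only [Finset.mem_insert, Finset.mem_singleton] at hpC
      rcases hpC with rfl | rfl
      · refine ⟨eA ⟨pA C, hpA C⟩, eB ⟨pB C, hpB C⟩, Or.inl ?_, by rw [heBlC]⟩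
        show f (pA C) = _
        simp only [hf, dif_pos (hpA C)]
      · refine ⟨eA ⟨pA C, hpA C⟩, eB ⟨pB C, hpB C⟩, Or.inr ?_, by rw [heBlC]⟩
        show f (pB C) = _
        have hnA : pB C ∉ A := fun h => hdisjAB (pB C) h (hpB C)
        simp only [hf, dif_neg hnA]
    · rintro ⟨i, j, hij, hC⟩
      rw [heBlC] at hC
      have hi : eA ⟨pA C, hpA C⟩ = i := congrArg Prod.fst hC
      have hj : eB ⟨pB C, hpB C⟩ = j := congrArg Prod.snd hC
      rcases hij with h | h
      · have h' : f p = Sum.inl i := h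
        by_cases hp : p ∈ A
        · simp only [hf, dif_pos hp] at h'
          have hq := eA.injective ((Sum.inl.inj h').trans hi.symm)
          have : p = pA C := congrArg Subtype.val hq
          rw [this]
          exact hpAmem C
        · simp only [hf, dif_neg hp] at h'
          exact absurd h' (by simp)
      · have h' : f p = Sum.inr j := h
        by_cases hp : p ∈ A
        · simp only [hf, dif_pos hp] at h'
          exact absurd h' (by simp)
        · simp only [hf, dif_neg hp] at h'
          have hq := eB.injective ((Sum.inr.inj h').trans hj.symm)
          have : p = pB C := congrArg Subtype.val hq
          rw [this]
          exact hpBmem C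
  refine ⟨⟨Equiv.sumCongr ePt eBl, ?_⟩, ?_⟩
  · intro u w
    rcases u with p | C <;> rcases w with q | D <;>
      simp only [incGraph, subKnn, SimpleGraph.fromRel_adj, Equiv.sumCongr_apply,
        Sum.map_inl, Sum.map_inr]
    · simp
    · simp [hkey]
    · simp [hkey]
    · simp
  · intro p
    exact ⟨ePt p, rfl⟩
end

section
/- Let Γ be a connected bipartite graph with color classes Y, Y' that is distance-regularized, with every vertex of eccentricity 4 and every vertex of Y' having valency 2 and c'₂ = 1 (two vertices of Y' at distance 2 have a unique common neighbour). If Γ is regular then Γ is the cycle of length 8; equivalently, Γ is isomorphic to the subdivision graph of the complete bipartite graph K_{n,n} for some n ≥ 2, with Y corresponding to the vertices of K_{n,n}. -/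
/-- The cycle of length 8. -/
def cycleEight : SimpleGraph (ZMod 8) :=
  SimpleGraph.fromRel (fun i j => j = i + 1)

lemma subKnn_adj (n : ℕ) (x y : (Fin n ⊕ Fin n) ⊕ Fin n × Fin n) :
    (subKnn n).Adj x y ↔
      (∃ i j : Fin n, (x = Sum.inl (Sum.inl i) ∨ x = Sum.inl (Sum.inr j)) ∧ y = Sum.inr (i, j)) ∨
      (∃ i j : Fin n, (y = Sum.inl (Sum.inl i) ∨ y = Sum.inl (Sum.inr j)) ∧ x = Sum.inr (i, j)) := by
  show (_ ≠ _ ∧ _) ↔ _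
  constructor
  · rintro ⟨-, h | h⟩
    · exact Or.inl h
    · exact Or.inr h
  · rintro (⟨i, j, h, rfl⟩ | ⟨i, j, h, rfl⟩)
    · exact ⟨by rcases h with rfl | rfl <;> simp, Or.inl ⟨i, j, h, rfl⟩⟩
    · exact ⟨by rcases h with rfl | rfl <;> simp, Or.inr ⟨i, j, h, rfl⟩⟩

lemma subKnn_not_adj_inl (n : ℕ) (a b : Fin n ⊕ Fin n) :
    ¬ (subKnn n).Adj (Sum.inl a) (Sum.inl b) := by simp [subKnn_adj]

lemma subKnn_not_adj_inr (n : ℕ) (p q : Fin n × Fin n) :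
    ¬ (subKnn n).Adj (Sum.inr p) (Sum.inr q) := by simp [subKnn_adj]

lemma subKnn_adj_a (n : ℕ) (i p q : Fin n) :
    (subKnn n).Adj (Sum.inl (Sum.inl i)) (Sum.inr (p, q)) ↔ p = i := by
  simp [subKnn_adj]

lemma subKnn_adj_a' (n : ℕ) (i p q : Fin n) :
    (subKnn n).Adj (Sum.inr (p, q)) (Sum.inl (Sum.inl i)) ↔ p = i := by
  simp [subKnn_adj]

lemma subKnn_adj_b (n : ℕ) (j p q : Fin n) :
    (subKnn n).Adj (Sum.inl (Sum.inr j)) (Sum.inr (p, q)) ↔ q = j := by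
  simp [subKnn_adj]

lemma subKnn_adj_b' (n : ℕ) (j p q : Fin n) :
    (subKnn n).Adj (Sum.inr (p, q)) (Sum.inl (Sum.inr j)) ↔ q = j := by
  simp [subKnn_adj]

instance (n : ℕ) : DecidableRel (subKnn n).Adj :=
  fun x y => decidable_of_iff' _ (subKnn_adj n x y)

instance : DecidableRel cycleEight.Adj :=
  fun x y => decidable_of_iff' _ (SimpleGraph.fromRel_adj _ x y)

def e82 : ((Fin 2 ⊕ Fin 2) ⊕ Fin 2 × Fin 2) ≃ ZMod 8 where
  toFun x := match x with
    | .inl (.inl i) => 4 * (i.val : ZMod 8)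
    | .inl (.inr j) => 4 * (j.val : ZMod 8) + 2
    | .inr (i, j) => 4 * (j.val : ZMod 8) + 2 * (((i + j : Fin 2)).val : ZMod 8) + 1
  invFun z := match z.val with
    | 0 => .inl (.inl 0)
    | 1 => .inr (0, 0)
    | 2 => .inl (.inr 0)
    | 3 => .inr (1, 0)
    | 4 => .inl (.inl 1)
    | 5 => .inr (1, 1)
    | 6 => .inl (.inr 1)
    | _ => .inr (0, 1)
  left_inv := by decide
  right_inv := by decide

def iso82 : subKnn 2 ≃g cycleEight :=
  ⟨e82, by intro a b; revert a b; decide⟩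

lemma bip_walk_parity {V : Type*} {G : SimpleGraph V} {Y : Set V}
    (hbip : ∀ u w : V, G.Adj u w → (u ∈ Y ↔ w ∉ Y)) :
    ∀ {u v : V} (p : G.Walk u v), ((u ∈ Y ↔ v ∈ Y) ↔ Even p.length) := by
  intro u v p
  induction p with
  | nil => simp
  | cons h q ih =>
    have h1 := hbip _ _ h
    simp only [SimpleGraph.Walk.length_cons, Nat.even_add_one]
    tauto

lemma exists_adj_dist_front {V : Type*} {G : SimpleGraph V} (hconn : G.Connected)
    {u v : V} {n : ℕ} (h : G.dist u v = n + 1) :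
    ∃ z : V, G.Adj u z ∧ G.dist z v = n := by
  obtain ⟨p, hp⟩ := hconn.exists_walk_length_eq_dist u v
  cases p with
  | nil => rw [h] at hp; simp at hp
  | @cons _ x _ ha q =>
    rw [h] at hp
    simp only [SimpleGraph.Walk.length_cons] at hp
    have h1 : G.dist x v ≤ n := le_trans (SimpleGraph.dist_le q) (by omega)
    have h2 : G.dist u v ≤ G.dist u x + G.dist x v := hconn.dist_triangle
    have h3 : G.dist u x ≤ 1 := by
      have := SimpleGraph.dist_le (SimpleGraph.Walk.cons ha SimpleGraph.Walk.nil)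
      simpa using this
    exact ⟨x, ha, by omega⟩

lemma exists_adj_dist_back {V : Type*} {G : SimpleGraph V} (hconn : G.Connected)
    {u v : V} {n : ℕ} (h : G.dist u v = n + 1) :
    ∃ z : V, G.Adj z v ∧ G.dist u z = n := by
  obtain ⟨z, hz1, hz2⟩ := exists_adj_dist_front hconn (show G.dist v u = n + 1 by
    rw [SimpleGraph.dist_comm]; exact h)
  exact ⟨z, hz1.symm, by rw [SimpleGraph.dist_comm]; exact hz2⟩

/-- Auxiliary relation: two vertices joined by a path through a `Y'`-vertex. -/
abbrev HadjP {V : Type} (G : SimpleGraph V) (Y : Set V) (p q : V) : Prop :=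
  p ≠ q ∧ ∃ u, u ∉ Y ∧ G.Adj p u ∧ G.Adj q u

lemma HadjP.symm {V : Type} {G : SimpleGraph V} {Y : Set V} {p q : V}
    (h : HadjP G Y p q) : HadjP G Y q p := by
  obtain ⟨h1, u, h2, h3, h4⟩ := h
  exact ⟨h1.symm, u, h2, h4, h3⟩

lemma dist_le_two_of_HadjP {V : Type} {G : SimpleGraph V} {Y : Set V} {p q : V}
    (h : HadjP G Y p q) : G.dist p q ≤ 2 := by
  obtain ⟨-, u, -, h1, h2⟩ := h
  have := SimpleGraph.dist_le (SimpleGraph.Walk.cons h1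
    (SimpleGraph.Walk.cons h2.symm SimpleGraph.Walk.nil))
  simpa using this

/-- a connected bipartite distance-regularized graph in which
every vertex has eccentricity 4, every vertex of Y' has valency 2 and c'₂ = 1
is, if regular, the cycle of length 8; equivalently, it is isomorphic to the
subdivision graph of `K_{n,n}` for some n ≥ 2, with Y corresponding to the
vertices of `K_{n,n}`. -/
theorem stmt19 {V : Type} [Fintype V] (G : SimpleGraph V) (Y : Set V)
    (hconn : G.Connected)
    (hbip : ∀ u w : V, G.Adj u w → (u ∈ Y ↔ w ∉ Y))
    (c b c' b' : ℕ → ℕ)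
    (hregY : ∀ x ∈ Y, ∀ i : ℕ, ∀ z : V, G.dist x z = i →
      ({w : V | G.Adj z w ∧ G.dist x w = i - 1}).ncard = c i ∧
      ({w : V | G.Adj z w ∧ G.dist x w = i + 1}).ncard = b i)
    (hregY' : ∀ x : V, x ∉ Y → ∀ i : ℕ, ∀ z : V, G.dist x z = i →
      ({w : V | G.Adj z w ∧ G.dist x w = i - 1}).ncard = c' i ∧
      ({w : V | G.Adj z w ∧ G.dist x w = i + 1}).ncard = b' i)
    (hecc : ∀ x : V, (∀ w : V, G.dist x w ≤ 4) ∧ ∃ w : V, G.dist x w = 4)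
    (hval2 : ∀ w : V, w ∉ Y → (G.neighborSet w).ncard = 2)
    (hc2' : c' 2 = 1) :
    ((∃ d : ℕ, ∀ v : V, (G.neighborSet v).ncard = d) → Nonempty (G ≃g cycleEight)) ∧
    ∃ n : ℕ, 2 ≤ n ∧ ∃ φ : G ≃g subKnn n,
      ∀ v ∈ Y, ∃ u : Fin n ⊕ Fin n, φ v = Sum.inl u := by
  classical
  have hadj_mem : ∀ {u w : V}, G.Adj u w → w ∉ Y → u ∈ Y := fun h hw => (hbip _ _ h).mpr hw
  have hadj_mem' : ∀ {u w : V}, G.Adj u w → w ∈ Y → u ∉ Y :=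
    fun h hw hu => (hbip _ _ h).mp hu hw
  have hnadjY : ∀ {u v : V}, u ∈ Y → v ∈ Y → ¬G.Adj u v := fun hu hv h => (hbip _ _ h).mp hu hv
  have hnadjY' : ∀ {u v : V}, u ∉ Y → v ∉ Y → ¬G.Adj u v := fun hu hv h => hu ((hbip _ _ h).mpr hv)
  have hpar : ∀ u v : V, ((u ∈ Y ↔ v ∈ Y) ↔ Even (G.dist u v)) := by
    intro u v
    obtain ⟨p, hp⟩ := hconn.exists_walk_length_eq_dist u v
    rw [← hp]
    exact bip_walk_parity hbip p
  have hdeg0 : ∀ v : V, ∃ u, G.Adj v u := by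
    intro v
    obtain ⟨w, hw⟩ := (hecc v).2
    obtain ⟨z, hz, -⟩ := exists_adj_dist_front hconn (show G.dist v w = 3 + 1 from hw)
    exact ⟨z, hz⟩
  have hnbr : ∀ w : V, w ∉ Y → ∃ p q : V, p ≠ q ∧ p ∈ Y ∧ q ∈ Y ∧ G.neighborSet w = {p, q} := by
    intro w hw
    obtain ⟨p, q, hpq, hset⟩ := Set.ncard_eq_two.mp (hval2 w hw)
    have hp : G.Adj w p := by rw [← SimpleGraph.mem_neighborSet, hset]; simp
    have hq : G.Adj w q := by rw [← SimpleGraph.mem_neighborSet, hset]; simp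
    exact ⟨p, q, hpq, hadj_mem hp.symm hw, hadj_mem hq.symm hw, hset⟩
  have hnbr_eq : ∀ w : V, w ∉ Y → ∀ a b : V, a ≠ b → G.Adj w a → G.Adj w b →
      ∀ x : V, G.Adj w x ↔ x = a ∨ x = b := by
    intro w hw a b hab hwa hwb x
    have hsub : ({a, b} : Set V) ⊆ G.neighborSet w := by
      rintro y (rfl | rfl)
      · exact hwa
      · exact hwb
    have heq : ({a, b} : Set V) = G.neighborSet w :=
      Set.eq_of_subset_of_ncard_le hsub
        (by rw [hval2 w hw, Set.ncard_pair hab]) (Set.toFinite _)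
    rw [← SimpleGraph.mem_neighborSet, ← heq]
    simp
  have hsimple : ∀ p q w1 w2 : V, p ≠ q → w1 ≠ w2 → w1 ∉ Y → w2 ∉ Y →
      G.Adj p w1 → G.Adj p w2 → G.Adj q w1 → G.Adj q w2 → False := by
    intro p q w1 w2 hpq hw12 h1 h2 hp1 hp2 hq1 hq2
    have hd : G.dist w1 w2 = 2 := by
      have hle : G.dist w1 w2 ≤ 2 := by
        have := SimpleGraph.dist_le (SimpleGraph.Walk.cons hp1.symm
          (SimpleGraph.Walk.cons hp2 SimpleGraph.Walk.nil))
        simpa using this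
      have h0 : G.dist w1 w2 ≠ 0 := fun h => hw12 (hconn.dist_eq_zero_iff.mp h)
      have h1' : G.dist w1 w2 ≠ 1 := fun h =>
        hnadjY' h1 h2 (SimpleGraph.dist_eq_one_iff_adj.mp h)
      omega
    have hS := (hregY' w1 h1 2 w2 hd).1
    rw [hc2'] at hS
    obtain ⟨y, hy⟩ := Set.ncard_eq_one.mp hS
    have hpS : p ∈ {w : V | G.Adj w2 w ∧ G.dist w1 w = 2 - 1} :=
      ⟨hp2.symm, by rw [show (2 : ℕ) - 1 = 1 from rfl, SimpleGraph.dist_eq_one_iff_adj]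
                    exact hp1.symm⟩
    have hqS : q ∈ {w : V | G.Adj w2 w ∧ G.dist w1 w = 2 - 1} :=
      ⟨hq2.symm, by rw [show (2 : ℕ) - 1 = 1 from rfl, SimpleGraph.dist_eq_one_iff_adj]
                    exact hq1.symm⟩
    rw [hy] at hpS hqS
    exact hpq ((Set.eq_of_mem_singleton hpS).trans (Set.eq_of_mem_singleton hqS).symm)
  have hdist3 : ∀ w : V, w ∉ Y → ∀ a b z : V, G.Adj w a → G.Adj w b →
      (∀ x : V, G.Adj w x ↔ x = a ∨ x = b) → z ∈ Y → z ≠ a → z ≠ b → G.dist w z = 3 := by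
    intro w hw a b z hwa hwb hiffw hz hza hzb
    have hodd : ¬ Even (G.dist w z) := fun h => hw (((hpar w z).mpr h).mpr hz)
    have hle := (hecc w).1 z
    have h1 : G.dist w z ≠ 1 := by
      intro h
      rcases (hiffw z).mp (SimpleGraph.dist_eq_one_iff_adj.mp h) with h' | h'
      · exact hza h'
      · exact hzb h'
    rw [Nat.not_even_iff] at hodd
    omega
  have hC' : ∀ w : V, w ∉ Y → ∀ a b z : V, G.Adj w a → G.Adj w b →
      (∀ x : V, G.Adj w x ↔ x = a ∨ x = b) → z ∈ Y → z ≠ a → z ≠ b →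
      ∃ y u : V, (y = a ∨ y = b) ∧ u ∉ Y ∧ G.Adj z u ∧ G.Adj y u ∧ z ≠ y := by
    intro w hw a b z hwa hwb hiffw hz hza hzb
    have hd3 := hdist3 w hw a b z hwa hwb hiffw hz hza hzb
    obtain ⟨u, huz, hu2⟩ := exists_adj_dist_back hconn (show G.dist w z = 2 + 1 from hd3)
    have huY : u ∉ Y := hadj_mem' huz hz
    obtain ⟨y, hwy, hyu⟩ := exists_adj_dist_front hconn (show G.dist w u = 1 + 1 from hu2)
    rw [SimpleGraph.dist_eq_one_iff_adj] at hyu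
    have hy : y = a ∨ y = b := (hiffw y).mp hwy
    have hzy : z ≠ y := by
      rintro rfl
      have : G.dist w z = 1 := SimpleGraph.dist_eq_one_iff_adj.mpr hwy
      omega
    exact ⟨y, u, hy, huY, huz.symm, hyu, hzy⟩
  -- triangle-freeness of the derived graph
  have htf : ∀ x y z : V, HadjP G Y x y → HadjP G Y y z → HadjP G Y x z → False := by
    rintro x y z ⟨hxy, w, hwY, hxw, hyw⟩ ⟨hyz, u2, hu2Y, hyu2, hzu2⟩ ⟨hxz, u1, hu1Y, hxu1, hzu1⟩
    have hxY : x ∈ Y := hadj_mem hxw hwY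
    have hyY : y ∈ Y := hadj_mem hyw hwY
    have hzY : z ∈ Y := hadj_mem hzu1 hu1Y
    have hiffw := hnbr_eq w hwY x y hxy hxw.symm hyw.symm
    have hd3 : G.dist w z = 3 :=
      hdist3 w hwY x y z hxw.symm hyw.symm hiffw hzY (Ne.symm hxz) (Ne.symm hyz)
    have hS := (hregY' w hwY 3 z hd3).1
    have hu1d : G.dist w u1 = 2 := by
      have hle : G.dist w u1 ≤ 2 := by
        have := SimpleGraph.dist_le (SimpleGraph.Walk.cons hxw.symm
          (SimpleGraph.Walk.cons hxu1 SimpleGraph.Walk.nil))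
        simpa using this
      have h0 : G.dist w u1 ≠ 0 := by
        intro h
        have hw' : w = u1 := hconn.dist_eq_zero_iff.mp h
        rcases (hiffw z).mp (by rw [hw']; exact hzu1.symm : G.Adj w z) with h' | h'
        · exact hxz h'.symm
        · exact hyz h'.symm
      have h1 : G.dist w u1 ≠ 1 := fun h =>
        hnadjY' hwY hu1Y (SimpleGraph.dist_eq_one_iff_adj.mp h)
      omega
    have hu2d : G.dist w u2 = 2 := by
      have hle : G.dist w u2 ≤ 2 := by
        have := SimpleGraph.dist_le (SimpleGraph.Walk.cons hyw.symm
          (SimpleGraph.Walk.cons hyu2 SimpleGraph.Walk.nil))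
        simpa using this
      have h0 : G.dist w u2 ≠ 0 := by
        intro h
        have hw' : w = u2 := hconn.dist_eq_zero_iff.mp h
        rcases (hiffw z).mp (by rw [hw']; exact hzu2.symm : G.Adj w z) with h' | h'
        · exact hxz h'.symm
        · exact hyz h'.symm
      have h1 : G.dist w u2 ≠ 1 := fun h =>
        hnadjY' hwY hu2Y (SimpleGraph.dist_eq_one_iff_adj.mp h)
      omega
    have hu12 : u1 ≠ u2 := by
      rintro rfl
      have hiffu := hnbr_eq u1 hu1Y x z hxz hxu1.symm hzu1.symm
      rcases (hiffu y).mp hyu2.symm with h' | h'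
      · exact hxy h'.symm
      · exact hyz h'
    have h2' : 1 < ({t : V | G.Adj z t ∧ G.dist w t = 3 - 1}).ncard := by
      rw [Set.one_lt_ncard_iff (Set.toFinite _)]
      exact ⟨u1, u2, ⟨hzu1, by rw [show (3 : ℕ) - 1 = 2 from rfl]; exact hu1d⟩,
        ⟨hzu2, by rw [show (3 : ℕ) - 1 = 2 from rfl]; exact hu2d⟩, hu12⟩
    rw [hS] at h2'
    have hc3 : 2 ≤ c' 3 := h2'
    have hboth : ∀ w' : V, w' ∉ Y → ∀ a b v : V, a ≠ b → G.Adj w' a → G.Adj w' b →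
        v ∈ Y → v ≠ a → v ≠ b → HadjP G Y v a ∧ HadjP G Y v b := by
      intro w' hw' a b v hab hwa hwb hv hva hvb
      have hiff' := hnbr_eq w' hw' a b hab hwa hwb
      have hd3' := hdist3 w' hw' a b v hwa hwb hiff' hv hva hvb
      have hS' := (hregY' w' hw' 3 v hd3').1
      have h2'' : 1 < ({t : V | G.Adj v t ∧ G.dist w' t = 3 - 1}).ncard := by
        rw [hS']; omega
      rw [Set.one_lt_ncard_iff (Set.toFinite _)] at h2''
      obtain ⟨t1, t2, ⟨ht1a, ht1d⟩, ⟨ht2a, ht2d⟩, ht12⟩ := h2''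
      have key : ∀ t : V, G.Adj v t → G.dist w' t = 3 - 1 → ∃ y, (y = a ∨ y = b) ∧ G.Adj y t := by
        intro t hvt htd
        rw [show (3 : ℕ) - 1 = 2 from rfl] at htd
        obtain ⟨y, hwy, hyt⟩ := exists_adj_dist_front hconn (show G.dist w' t = 1 + 1 from htd)
        rw [SimpleGraph.dist_eq_one_iff_adj] at hyt
        exact ⟨y, (hiff' y).mp hwy, hyt⟩
      obtain ⟨y1, hy1, hy1t⟩ := key t1 ht1a ht1d
      obtain ⟨y2, hy2, hy2t⟩ := key t2 ht2a ht2d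
      have ht1Y : t1 ∉ Y := hadj_mem' ht1a.symm hv
      have ht2Y : t2 ∉ Y := hadj_mem' ht2a.symm hv
      have hy12 : y1 ≠ y2 := by
        rintro rfl
        exact hsimple v y1 t1 t2
          (by rcases hy1 with rfl | rfl; exacts [hva, hvb]) ht12 ht1Y ht2Y
          ht1a ht2a hy1t hy2t
      have mk : ∀ y t : V, t ∉ Y → G.Adj v t → G.Adj y t → v ≠ y → HadjP G Y v y :=
        fun y t h1 h2 h3 h4 => ⟨h4, t, h1, h2, h3⟩
      rcases hy1 with rfl | rfl <;> rcases hy2 with rfl | rfl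
      · exact absurd rfl hy12
      · exact ⟨mk _ t1 ht1Y ht1a hy1t hva, mk _ t2 ht2Y ht2a hy2t hvb⟩
      · exact ⟨mk _ t2 ht2Y ht2a hy2t hva, mk _ t1 ht1Y ht1a hy1t hvb⟩
      · exact absurd rfl hy12
    have hcomp : ∀ p q : V, p ∈ Y → q ∈ Y → p ≠ q → HadjP G Y p q := by
      intro p q hp hq hpq
      obtain ⟨t, ht⟩ := hdeg0 p
      have htY : t ∉ Y := hadj_mem' ht.symm hp
      obtain ⟨a, b2, hab, haY, hbY, hset⟩ := hnbr t htY
      have hta : G.Adj t a := by rw [← SimpleGraph.mem_neighborSet, hset]; simp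
      have htb : G.Adj t b2 := by rw [← SimpleGraph.mem_neighborSet, hset]; simp
      by_cases hqa : q = a
      · exact ⟨hpq, t, htY, ht, by rw [hqa]; exact hta.symm⟩
      by_cases hqb : q = b2
      · exact ⟨hpq, t, htY, ht, by rw [hqb]; exact htb.symm⟩
      have hiff' := hnbr_eq t htY a b2 hab hta htb
      have hp' : p = a ∨ p = b2 := (hiff' p).mp ht.symm
      have hq2 := hboth t htY a b2 q hab hta htb hq hqa hqb
      rcases hp' with rfl | rfl
      · exact HadjP.symm hq2.1
      · exact HadjP.symm hq2.2
    obtain ⟨v4, hv4⟩ := (hecc x).2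
    have hv4x : x ≠ v4 := by rintro rfl; simp [SimpleGraph.dist_self] at hv4
    by_cases hv4Y : v4 ∈ Y
    · have h := dist_le_two_of_HadjP (hcomp x v4 hxY hv4Y hv4x)
      omega
    · obtain ⟨a, b2, hab, haY, hbY, hset⟩ := hnbr v4 hv4Y
      have hva : G.Adj v4 a := by rw [← SimpleGraph.mem_neighborSet, hset]; simp
      have h1 : G.dist a v4 = 1 := SimpleGraph.dist_eq_one_iff_adj.mpr hva.symm
      have h2 : G.dist x a ≤ 2 := by
        by_cases hxa : x = a
        · rw [hxa, SimpleGraph.dist_self]; omega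
        · exact dist_le_two_of_HadjP (hcomp x a hxY haY hxa)
      have h3 : G.dist x v4 ≤ G.dist x a + G.dist a v4 := hconn.dist_triangle
      omega
  -- base edge
  obtain ⟨v0⟩ := hconn.nonempty
  obtain ⟨w0, hw0⟩ : ∃ w : V, w ∉ Y := by
    by_cases h : v0 ∈ Y
    · obtain ⟨u, hu⟩ := hdeg0 v0
      exact ⟨u, (hbip v0 u hu).mp h⟩
    · exact ⟨v0, h⟩
  obtain ⟨a0, b0, hab0, ha0Y, hb0Y, hset0⟩ := hnbr w0 hw0
  have ha0w : G.Adj w0 a0 := by rw [← SimpleGraph.mem_neighborSet, hset0]; simp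
  have hb0w : G.Adj w0 b0 := by rw [← SimpleGraph.mem_neighborSet, hset0]; simp
  have hiff0 := hnbr_eq w0 hw0 a0 b0 hab0 ha0w hb0w
  set A : Set V := {z : V | HadjP G Y z b0} with hAdef
  set B : Set V := {z : V | HadjP G Y z a0} with hBdef
  have hmemA : ∀ z : V, z ∈ A ↔ HadjP G Y z b0 := fun z => Iff.rfl
  have hmemB : ∀ z : V, z ∈ B ↔ HadjP G Y z a0 := fun z => Iff.rfl
  have hAY : ∀ z : V, z ∈ A → z ∈ Y := by
    intro z hz
    obtain ⟨-, u, h1, h2, -⟩ := (hmemA z).mp hz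
    exact hadj_mem h2 h1
  have hBY : ∀ z : V, z ∈ B → z ∈ Y := by
    intro z hz
    obtain ⟨-, u, h1, h2, -⟩ := (hmemB z).mp hz
    exact hadj_mem h2 h1
  have ha0A : a0 ∈ A := (hmemA a0).mpr ⟨hab0, w0, hw0, ha0w.symm, hb0w.symm⟩
  have hb0B : b0 ∈ B := (hmemB b0).mpr ⟨hab0.symm, w0, hw0, hb0w.symm, ha0w.symm⟩
  have hb0A : b0 ∉ A := fun h => ((hmemA b0).mp h).1 rfl
  have ha0B : a0 ∉ B := fun h => ((hmemB a0).mp h).1 rfl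
  have hADB : ∀ z : V, z ∈ A → z ∈ B → False := by
    intro z hzA hzB
    exact htf z b0 a0 ((hmemA z).mp hzA) ⟨hab0.symm, w0, hw0, hb0w.symm, ha0w.symm⟩
      ((hmemB z).mp hzB)
  have hcover : ∀ z : V, z ∈ Y → z ∈ A ∨ z ∈ B := by
    intro z hz
    by_cases hza : z = a0
    · exact Or.inl (hza ▸ ha0A)
    by_cases hzb : z = b0
    · exact Or.inr (hzb ▸ hb0B)
    obtain ⟨y, u, hy, huY, hzu, hyu, hzy⟩ := hC' w0 hw0 a0 b0 z ha0w hb0w hiff0 hz hza hzb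
    rcases hy with rfl | rfl
    · exact Or.inr ((hmemB z).mpr ⟨hzy, u, huY, hzu, hyu⟩)
    · exact Or.inl ((hmemA z).mpr ⟨hzy, u, huY, hzu, hyu⟩)
  have hAB : ∀ p : V, p ∈ A → ∀ q : V, q ∈ B → HadjP G Y p q := by
    intro p hpA q hqB
    obtain ⟨hpb, ep, hepY, hpe, hbe⟩ := (hmemA p).mp hpA
    have hpq : p ≠ q := fun h => hADB p hpA (h ▸ hqB)
    by_cases hqb : q = b0
    · subst hqb; exact ⟨hpb, ep, hepY, hpe, hbe⟩
    have hiffe := hnbr_eq ep hepY p b0 hpb hpe.symm hbe.symm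
    obtain ⟨y, u, hy, huY, hqu, hyu, hqy⟩ :=
      hC' ep hepY p b0 q hpe.symm hbe.symm hiffe (hBY q hqB) (Ne.symm hpq) hqb
    rcases hy with rfl | rfl
    · exact HadjP.symm ⟨hqy, u, huY, hqu, hyu⟩
    · exact absurd ((hmemA q).mpr ⟨hqy, u, huY, hqu, hyu⟩) (fun h => hADB q h hqB)
  have hends : ∀ w : V, w ∉ Y →
      ∃ p q : V, p ∈ A ∧ q ∈ B ∧ (∀ x : V, G.Adj w x ↔ x = p ∨ x = q) := by
    intro w hw
    obtain ⟨p, q, hpq, hpY, hqY, hset⟩ := hnbr w hw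
    have hwp : G.Adj w p := by rw [← SimpleGraph.mem_neighborSet, hset]; simp
    have hwq : G.Adj w q := by rw [← SimpleGraph.mem_neighborSet, hset]; simp
    have hiffw := hnbr_eq w hw p q hpq hwp hwq
    have hPQ : HadjP G Y p q := ⟨hpq, w, hw, hwp.symm, hwq.symm⟩
    rcases hcover p hpY with hpA | hpB <;> rcases hcover q hqY with hqA | hqB
    · exact (htf p q b0 hPQ ((hmemA q).mp hqA) ((hmemA p).mp hpA)).elim
    · exact ⟨p, q, hpA, hqB, hiffw⟩
    · exact ⟨q, p, hqA, hpB, fun x => (hiffw x).trans or_comm⟩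
    · exact (htf p q a0 hPQ ((hmemB q).mp hqB) ((hmemB p).mp hpB)).elim
  choose! eA eB heA heB hiffE using hends
  have hadjeA : ∀ w : V, w ∉ Y → G.Adj w (eA w) := fun w hw => (hiffE w hw (eA w)).mpr (Or.inl rfl)
  have hadjeB : ∀ w : V, w ∉ Y → G.Adj w (eB w) := fun w hw => (hiffE w hw (eB w)).mpr (Or.inr rfl)
  have hneAB : ∀ w : V, w ∉ Y → eA w ≠ eB w := fun w hw h => hADB _ (heA w hw) (h ▸ heB w hw)
  have hdegY : ∀ x : V, x ∈ Y → (G.neighborSet x).ncard = b 0 := by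
    intro x hx
    have h := (hregY x hx 0 x (by simp)).2
    rw [← h]
    congr 1
    ext w
    simp [SimpleGraph.dist_eq_one_iff_adj]
  have himA : eA '' (G.neighborSet b0) = A := by
    ext z
    constructor
    · rintro ⟨w, hw, rfl⟩
      have hadj : G.Adj b0 w := hw
      exact heA w (hadj_mem' hadj.symm hb0Y)
    · intro hz
      obtain ⟨hzb, u, huY, hzu, hbu⟩ := (hmemA z).mp hz
      refine ⟨u, hbu, ?_⟩
      rcases (hiffE u huY z).mp hzu.symm with h | h
      · exact h.symm
      · exact (hADB _ (h ▸ hz) (heB u huY)).elim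
  have hinjA : Set.InjOn eA (G.neighborSet b0) := by
    intro w1 h1 w2 h2 he
    by_contra hne
    have had1 : G.Adj b0 w1 := h1
    have had2 : G.Adj b0 w2 := h2
    have h1Y : w1 ∉ Y := hadj_mem' had1.symm hb0Y
    have h2Y : w2 ∉ Y := hadj_mem' had2.symm hb0Y
    exact hsimple (eA w1) b0 w1 w2 (fun h => hb0A (h ▸ heA w1 h1Y)) hne h1Y h2Y
      (hadjeA w1 h1Y).symm (by rw [he]; exact (hadjeA w2 h2Y).symm) had1 had2
  have hcA : A.ncard = b 0 := by
    rw [← himA, Set.ncard_image_of_injOn hinjA]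
    exact hdegY b0 hb0Y
  have himB : eB '' (G.neighborSet a0) = B := by
    ext z
    constructor
    · rintro ⟨w, hw, rfl⟩
      have hadj : G.Adj a0 w := hw
      exact heB w (hadj_mem' hadj.symm ha0Y)
    · intro hz
      obtain ⟨hza, u, huY, hzu, hau⟩ := (hmemB z).mp hz
      refine ⟨u, hau, ?_⟩
      rcases (hiffE u huY z).mp hzu.symm with h | h
      · exact (hADB _ (heA u huY) (h ▸ hz)).elim
      · exact h.symm
  have hinjB : Set.InjOn eB (G.neighborSet a0) := by
    intro w1 h1 w2 h2 he
    by_contra hne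
    have had1 : G.Adj a0 w1 := h1
    have had2 : G.Adj a0 w2 := h2
    have h1Y : w1 ∉ Y := hadj_mem' had1.symm ha0Y
    have h2Y : w2 ∉ Y := hadj_mem' had2.symm ha0Y
    exact hsimple (eB w1) a0 w1 w2 (fun h => ha0B (h ▸ heB w1 h1Y)) hne h1Y h2Y
      (hadjeB w1 h1Y).symm (by rw [he]; exact (hadjeB w2 h2Y).symm) had1 had2
  have hcB : B.ncard = b 0 := by
    rw [← himB, Set.ncard_image_of_injOn hinjB]
    exact hdegY a0 ha0Y
  have hn2 : 2 ≤ b 0 := by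
    obtain ⟨v4, hv4⟩ := (hecc b0).2
    have hv4Y : v4 ∈ Y := ((hpar b0 v4).mpr (by rw [hv4]; decide)).mp hb0Y
    have hv4b : v4 ≠ b0 := by rintro rfl; simp [SimpleGraph.dist_self] at hv4
    have hv4A : v4 ∉ A := by
      intro h
      have hle := dist_le_two_of_HadjP ((hmemA v4).mp h)
      rw [SimpleGraph.dist_comm] at hle
      omega
    have hv4B : v4 ∈ B := (hcover v4 hv4Y).resolve_left hv4A
    have hlt : 1 < B.ncard := by
      rw [Set.one_lt_ncard_iff (Set.toFinite _)]
      exact ⟨b0, v4, hb0B, hv4B, fun h => hv4b h.symm⟩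
    omega
  haveI fA : Fintype ↥A := Fintype.ofFinite _
  haveI fB : Fintype ↥B := Fintype.ofFinite _
  obtain ⟨eqA⟩ : Nonempty (↥A ≃ Fin (b 0)) := by
    refine ⟨Fintype.equivFinOfCardEq ?_⟩
    rw [← Nat.card_eq_fintype_card, Nat.card_coe_set_eq, hcA]
  obtain ⟨eqB⟩ : Nonempty (↥B ≃ Fin (b 0)) := by
    refine ⟨Fintype.equivFinOfCardEq ?_⟩
    rw [← Nat.card_eq_fintype_card, Nat.card_coe_set_eq, hcB]
  have hedex : ∀ p q : V, p ∈ A → q ∈ B → ∃ u : V, u ∉ Y ∧ G.Adj p u ∧ G.Adj q u := by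
    intro p q hp hq
    exact (hAB p hp q hq).2
  choose! ed hed1 hed2 hed3 using hedex
  let f : V → (Fin (b 0) ⊕ Fin (b 0)) ⊕ Fin (b 0) × Fin (b 0) := fun v =>
    if hv : v ∈ A then Sum.inl (Sum.inl (eqA ⟨v, hv⟩))
    else if hv' : v ∈ B then Sum.inl (Sum.inr (eqB ⟨v, hv'⟩))
    else Sum.inr (eqA ⟨eA v, heA v (fun hy => (hcover v hy).elim hv hv')⟩,
                  eqB ⟨eB v, heB v (fun hy => (hcover v hy).elim hv hv')⟩)
  have hfA : ∀ (v : V) (hv : v ∈ A), f v = Sum.inl (Sum.inl (eqA ⟨v, hv⟩)) :=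
    fun v hv => dif_pos hv
  have hfB : ∀ (v : V), v ∉ A → ∀ (hv : v ∈ B), f v = Sum.inl (Sum.inr (eqB ⟨v, hv⟩)) :=
    fun v hv1 hv => (dif_neg hv1).trans (dif_pos hv)
  have hfE : ∀ (v : V) (hv : v ∉ Y),
      f v = Sum.inr (eqA ⟨eA v, heA v hv⟩, eqB ⟨eB v, heB v hv⟩) := by
    intro v hv
    have h1 : v ∉ A := fun h => hv (hAY v h)
    have h2 : v ∉ B := fun h => hv (hBY v h)
    exact (dif_neg h1).trans (dif_neg h2)
  let g : (Fin (b 0) ⊕ Fin (b 0)) ⊕ Fin (b 0) × Fin (b 0) → V := fun x =>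
    match x with
    | Sum.inl (Sum.inl i) => ↑(eqA.symm i)
    | Sum.inl (Sum.inr j) => ↑(eqB.symm j)
    | Sum.inr (i, j) => ed ↑(eqA.symm i) ↑(eqB.symm j)
  have hgf : Function.LeftInverse g f := by
    intro v
    by_cases hv : v ∈ A
    · rw [hfA v hv]
      show ↑(eqA.symm (eqA ⟨v, hv⟩)) = v
      rw [Equiv.symm_apply_apply]
    · by_cases hv' : v ∈ B
      · rw [hfB v hv hv']
        show ↑(eqB.symm (eqB ⟨v, hv'⟩)) = v
        rw [Equiv.symm_apply_apply]
      · have hvY : v ∉ Y := fun hy => (hcover v hy).elim hv hv'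
        rw [hfE v hvY]
        show ed ↑(eqA.symm (eqA ⟨eA v, heA v hvY⟩)) ↑(eqB.symm (eqB ⟨eB v, heB v hvY⟩)) = v
        rw [Equiv.symm_apply_apply, Equiv.symm_apply_apply]
        show ed (eA v) (eB v) = v
        by_contra hne
        exact hsimple (eA v) (eB v) (ed (eA v) (eB v)) v (hneAB v hvY)
          hne (hed1 _ _ (heA v hvY) (heB v hvY)) hvY
          (hed2 _ _ (heA v hvY) (heB v hvY)) (hadjeA v hvY).symm
          (hed3 _ _ (heA v hvY) (heB v hvY)) (hadjeB v hvY).symm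
  have hfg : Function.RightInverse g f := by
    rintro ((i | j) | ⟨i, j⟩)
    · show f ↑(eqA.symm i) = Sum.inl (Sum.inl i)
      rw [hfA _ (eqA.symm i).2]
      simp
    · show f ↑(eqB.symm j) = Sum.inl (Sum.inr j)
      have hvB : ↑(eqB.symm j) ∈ B := (eqB.symm j).2
      have hvA : ↑(eqB.symm j) ∉ A := fun h => hADB _ h hvB
      rw [hfB _ hvA hvB]
      simp
    · show f (ed ↑(eqA.symm i) ↑(eqB.symm j)) = Sum.inr (i, j)
      have hpA := (eqA.symm i).2
      have hqB := (eqB.symm j).2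
      have hvY : ed ↑(eqA.symm i) ↑(eqB.symm j) ∉ Y := hed1 _ _ hpA hqB
      rw [hfE _ hvY]
      have h1 : eA (ed ↑(eqA.symm i) ↑(eqB.symm j)) = ↑(eqA.symm i) := by
        rcases (hiffE _ hvY _).mp (hed2 _ _ hpA hqB).symm with h | h
        · exact h.symm
        · exact (hADB _ hpA (h ▸ heB _ hvY)).elim
      have h2 : eB (ed ↑(eqA.symm i) ↑(eqB.symm j)) = ↑(eqB.symm j) := by
        rcases (hiffE _ hvY _).mp (hed3 _ _ hpA hqB).symm with h | h
        · exact (hADB _ (h ▸ heA _ hvY) hqB).elim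
        · exact h.symm
      have e1 : (⟨eA (ed ↑(eqA.symm i) ↑(eqB.symm j)), heA _ hvY⟩ : ↥A) = eqA.symm i :=
        Subtype.ext h1
      have e2 : (⟨eB (ed ↑(eqA.symm i) ↑(eqB.symm j)), heB _ hvY⟩ : ↥B) = eqB.symm j :=
        Subtype.ext h2
      rw [e1, e2, Equiv.apply_symm_apply, Equiv.apply_symm_apply]
  have hadjA : ∀ (u : V), u ∈ A → ∀ (v : V), v ∉ Y → (G.Adj u v ↔ u = eA v) := by
    intro u hu v hv
    constructor
    · intro h
      rcases (hiffE v hv u).mp h.symm with h1 | h1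
      · exact h1
      · exact (hADB u hu (h1 ▸ heB v hv)).elim
    · rintro rfl
      exact (hadjeA v hv).symm
  have hadjB : ∀ (u : V), u ∈ B → ∀ (v : V), v ∉ Y → (G.Adj u v ↔ u = eB v) := by
    intro u hu v hv
    constructor
    · intro h
      rcases (hiffE v hv u).mp h.symm with h1 | h1
      · exact (hADB u (h1 ▸ heA v hv) hu).elim
      · exact h1
    · rintro rfl
      exact (hadjeB v hv).symm
  have hmap : ∀ u v : V, (subKnn (b 0)).Adj (f u) (f v) ↔ G.Adj u v := by
    have hYf : ∀ v : V, v ∉ A → v ∉ B → v ∉ Y := fun v h1 h2 hy => (hcover v hy).elim h1 h2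
    intro u v
    by_cases hu : u ∈ A
    · by_cases hv : v ∈ A
      · rw [hfA u hu, hfA v hv]
        exact iff_of_false (subKnn_not_adj_inl _ _ _) (hnadjY (hAY u hu) (hAY v hv))
      by_cases hv' : v ∈ B
      · rw [hfA u hu, hfB v hv hv']
        exact iff_of_false (subKnn_not_adj_inl _ _ _) (hnadjY (hAY u hu) (hBY v hv'))
      · have hvY := hYf v hv hv'
        rw [hfA u hu, hfE v hvY, subKnn_adj_a, hadjA u hu v hvY,
          Equiv.apply_eq_iff_eq, Subtype.mk.injEq]
        exact eq_comm
    · by_cases hu' : u ∈ B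
      · by_cases hv : v ∈ A
        · rw [hfB u hu hu', hfA v hv]
          exact iff_of_false (subKnn_not_adj_inl _ _ _) (hnadjY (hBY u hu') (hAY v hv))
        by_cases hv' : v ∈ B
        · rw [hfB u hu hu', hfB v hv hv']
          exact iff_of_false (subKnn_not_adj_inl _ _ _) (hnadjY (hBY u hu') (hBY v hv'))
        · have hvY := hYf v hv hv'
          rw [hfB u hu hu', hfE v hvY, subKnn_adj_b, hadjB u hu' v hvY,
            Equiv.apply_eq_iff_eq, Subtype.mk.injEq]
          exact eq_comm
      · have huY := hYf u hu hu'
        by_cases hv : v ∈ A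
        · rw [hfE u huY, hfA v hv, subKnn_adj_a', G.adj_comm, hadjA v hv u huY,
            Equiv.apply_eq_iff_eq, Subtype.mk.injEq]
          exact eq_comm
        by_cases hv' : v ∈ B
        · rw [hfE u huY, hfB v hv hv', subKnn_adj_b', G.adj_comm, hadjB v hv' u huY,
            Equiv.apply_eq_iff_eq, Subtype.mk.injEq]
          exact eq_comm
        · have hvY := hYf v hv hv'
          rw [hfE u huY, hfE v hvY]
          exact iff_of_false (subKnn_not_adj_inr _ _ _) (hnadjY' huY hvY)
  let φ : G ≃g subKnn (b 0) :=
    { toEquiv := ⟨f, g, hgf, hfg⟩, map_rel_iff' := fun {a b} => hmap a b }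
  have hφ : ∀ v : V, φ v = f v := fun v => rfl
  have himg : ∀ v ∈ Y, ∃ u : Fin (b 0) ⊕ Fin (b 0), φ v = Sum.inl u := by
    intro v hv
    by_cases h : v ∈ A
    · exact ⟨Sum.inl (eqA ⟨v, h⟩), by rw [hφ, hfA v h]⟩
    · have h' : v ∈ B := (hcover v hv).resolve_left h
      exact ⟨Sum.inr (eqB ⟨v, h'⟩), by rw [hφ, hfB v h h']⟩
  constructor
  · rintro ⟨d, hd⟩
    have e1 := hd w0
    rw [hval2 w0 hw0] at e1
    have e2 := hd a0
    rw [hdegY a0 ha0Y] at e2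
    have h2 : b 0 = 2 := by omega
    have φ' : G ≃g subKnn 2 := by rw [← h2]; exact φ
    exact ⟨φ'.trans iso82⟩
  · exact ⟨b 0, hn2, φ, himg⟩
end
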